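/- arXiv:1901.01687 — 7 statements merged into one kernel-verified Lean document; each statement's English description precedes it below -/
import Mathlib

section
/- For every integer k ≥ 1 and every ε > 0 there exists a constant C = C(k, ε) such that for all integers N ≥ 2 and all real numbers Y > 0, the number I_k(N,Y) of solutions to the inequality |u₁/n₁^k − u₂/n₂^k| ≤ 1/Y in integers n₁, n₂, u₁, u₂ with 1 ≤ n₁, n₂ ≤ N, 1 ≤ u₁ ≤ n₁^k and 1 ≤ u₂ ≤ n₂^k satisfies I_k(N,Y) ≤ C (N^{2k+2}/Y + N^{k+1}) N^ε. -/
open Finset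


lemma gcd_pow_eq' (m n k : ℕ) : Nat.gcd (m ^ k) (n ^ k) = Nat.gcd m n ^ k := by
  rcases Nat.eq_zero_or_pos (Nat.gcd m n) with h | h
  · obtain ⟨rfl, rfl⟩ := Nat.gcd_eq_zero_iff.mp h
    simp
  · have key : ∀ g a b : ℕ, Nat.Coprime a b →
        Nat.gcd ((g * a) ^ k) ((g * b) ^ k) = Nat.gcd (g * a) (g * b) ^ k := by
      intro g a b hco
      rw [mul_pow, mul_pow, Nat.gcd_mul_left, Nat.gcd_mul_left,
        Nat.Coprime.gcd_eq_one ((Nat.Coprime.pow k k hco)), Nat.Coprime.gcd_eq_one hco,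
        mul_one, mul_one]
    have hm : m = Nat.gcd m n * (m / Nat.gcd m n) :=
      (Nat.mul_div_cancel' (Nat.gcd_dvd_left m n)).symm
    have hn : n = Nat.gcd m n * (n / Nat.gcd m n) :=
      (Nat.mul_div_cancel' (Nat.gcd_dvd_right m n)).symm
    have := key (Nat.gcd m n) (m / Nat.gcd m n) (n / Nat.gcd m n)
      (Nat.coprime_div_gcd_div_gcd h)
    rw [← hm, ← hn] at this
    exact this


lemma pair_bound' (k n₁ n₂ : ℕ) (h1 : 1 ≤ n₁) (h2 : 1 ≤ n₂) (Y : ℝ) (hY : 0 < Y) :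
    (((Icc 1 (n₁ ^ k) ×ˢ Icc 1 (n₂ ^ k)).filter (fun u : ℕ × ℕ =>
        |(u.1 : ℝ) / (n₁ : ℝ) ^ k - (u.2 : ℝ) / (n₂ : ℝ) ^ k| ≤ 1 / Y)).card : ℝ)
      ≤ 2 * (n₁ : ℝ) ^ k * (n₂ : ℝ) ^ k / Y + (Nat.gcd (n₁ ^ k) (n₂ ^ k) : ℝ) := by
  classical
  set a := n₁ ^ k with ha
  set b := n₂ ^ k with hb
  have ha1 : 1 ≤ a := Nat.one_le_pow _ _ h1
  have hb1 : 1 ≤ b := Nat.one_le_pow _ _ h2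
  set g := Nat.gcd a b with hg
  have hg1 : 0 < g := Nat.gcd_pos_of_pos_left _ ha1
  have hca : ((a : ℕ) : ℝ) = (n₁ : ℝ) ^ k := by rw [ha]; push_cast; ring
  have hcb : ((b : ℕ) : ℝ) = (n₂ : ℝ) ^ k := by rw [hb]; push_cast; ring
  have haR : (0 : ℝ) < (a : ℝ) := by exact_mod_cast ha1
  have hbR : (0 : ℝ) < (b : ℝ) := by exact_mod_cast hb1
  set T := (Icc 1 a ×ˢ Icc 1 b).filter (fun u : ℕ × ℕ =>
      |(u.1 : ℝ) / (n₁ : ℝ) ^ k - (u.2 : ℝ) / (n₂ : ℝ) ^ k| ≤ 1 / Y) with hT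
  set φ : ℕ × ℕ → ℤ := fun u => (u.1 : ℤ) * b - (u.2 : ℤ) * a with hφ
  set B : ℤ := ⌊(a : ℝ) * b / Y⌋ with hB
  have hB0 : 0 ≤ B := Int.floor_nonneg.mpr (by positivity)
  have hgZ : (0 : ℤ) < (g : ℤ) := by exact_mod_cast hg1
  set M : Finset ℤ := (Finset.Icc (-(B / (g : ℤ))) (B / (g : ℤ))).image
      (fun t => t * (g : ℤ)) with hM
  have hmem : ∀ u ∈ T, φ u ∈ M := by
    intro u hu
    simp only [hT, mem_filter, mem_product, mem_Icc] at hu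
    obtain ⟨⟨⟨hu11, hu12⟩, hu21, hu22⟩, habs⟩ := hu
    have key : |((φ u : ℤ) : ℝ)| ≤ (a : ℝ) * b / Y := by
      have heq : ((φ u : ℤ) : ℝ) = ((u.1 : ℝ) / (n₁ : ℝ) ^ k - (u.2 : ℝ) / (n₂ : ℝ) ^ k)
          * ((a : ℝ) * b) := by
        rw [← hca, ← hcb]
        field_simp [hφ]
        simp only [hφ]
        push_cast
        ring
      rw [heq, abs_mul, abs_of_pos (by positivity : (0:ℝ) < (a:ℝ) * b)]
      calc |(u.1 : ℝ) / (n₁ : ℝ) ^ k - (u.2 : ℝ) / (n₂ : ℝ) ^ k| * ((a:ℝ) * b)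
          ≤ (1 / Y) * ((a:ℝ) * b) := by gcongr
        _ = (a : ℝ) * b / Y := by ring
    have hub : φ u ≤ B := Int.le_floor.mpr (le_trans (le_abs_self _) key)
    have hlb : -B ≤ φ u := by
      have : -(φ u) ≤ B := Int.le_floor.mpr (le_trans (by push_cast; exact neg_le_abs _) key)
      omega
    have hdvd : (g : ℤ) ∣ φ u := by
      have d1 : (g : ℤ) ∣ (b : ℤ) := Int.natCast_dvd_natCast.mpr (Nat.gcd_dvd_right a b)
      have d2 : (g : ℤ) ∣ (a : ℤ) := Int.natCast_dvd_natCast.mpr (Nat.gcd_dvd_left a b)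
      exact dvd_sub (Dvd.dvd.mul_left d1 _) (Dvd.dvd.mul_left d2 _)
    simp only [hM, Finset.mem_image, Finset.mem_Icc]
    refine ⟨φ u / (g : ℤ), ⟨?_, Int.ediv_le_ediv hgZ hub⟩, Int.ediv_mul_cancel hdvd⟩
    · rw [neg_le]
      rw [Int.le_ediv_iff_mul_le hgZ]
      have : -(φ u / (g : ℤ)) * (g : ℤ) = -(φ u / (g : ℤ) * (g : ℤ)) := by ring
      rw [this, Int.ediv_mul_cancel hdvd]
      omega
  have hcard : T.card = ∑ m ∈ M, (T.filter (fun u => φ u = m)).card :=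
    Finset.card_eq_sum_card_fiberwise hmem
  -- fiber bound
  set q := a / g with hq
  have hqg : q * g = a := Nat.div_mul_cancel (Nat.gcd_dvd_left a b)
  have hq0 : 0 < q := by
    rcases Nat.eq_zero_or_pos q with h | h
    · exfalso; rw [h, zero_mul] at hqg; omega
    · exact h
  have hfib : ∀ m ∈ M, (T.filter (fun u => φ u = m)).card ≤ g := by
    intro m _
    have main : ∀ x y : ℕ × ℕ, x.1 ≤ a → y.1 ≤ a → 1 ≤ x.1 → 1 ≤ y.1 → φ x = φ y →
        (x.1 - 1) / q = (y.1 - 1) / q → x.1 ≤ y.1 → x.1 = y.1 := by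
      intro x y hxa hya hx1 hy1 hphi hdiv hle
      set d := y.1 - x.1 with hd
      have hz : ((y.1 : ℤ) - x.1) * b = ((y.2 : ℤ) - x.2) * a := by
        simp only [hφ] at hphi
        linarith [hphi]
      have hdn : a ∣ d * b := by
        have hcast : ((d * b : ℕ) : ℤ) = ((y.2 : ℤ) - x.2) * a := by
          push_cast [hd, Nat.cast_sub hle]
          linarith [hz]
        have : (a : ℤ) ∣ ((d * b : ℕ) : ℤ) := hcast ▸ dvd_mul_left _ _
        exact_mod_cast this
      have hqd : q ∣ d := by
        have hbg : g * (b / g) = b := Nat.mul_div_cancel' (Nat.gcd_dvd_right a b)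
        have hco : Nat.Coprime q (b / g) := Nat.coprime_div_gcd_div_gcd hg1
        have h1 : q * g ∣ (d * (b / g)) * g := by
          rw [hqg]
          calc a ∣ d * b := hdn
            _ = d * (b / g) * g := by rw [mul_assoc, mul_comm (b/g) g, hbg]
        have h2 : q ∣ d * (b / g) := (Nat.mul_dvd_mul_iff_right hg1).mp h1
        exact hco.dvd_of_dvd_mul_right h2
      have hlt : d < q := by
        have h1 := Nat.div_add_mod (x.1 - 1) q
        have h2 := Nat.div_add_mod (y.1 - 1) q
        rw [← hdiv] at h2
        have h3 : (x.1 - 1) % q < q := Nat.mod_lt _ hq0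
        have h4 : (y.1 - 1) % q < q := Nat.mod_lt _ hq0
        omega
      have := Nat.eq_zero_of_dvd_of_lt hqd hlt
      · omega
    calc (T.filter (fun u => φ u = m)).card ≤ (Finset.range g).card := by
          apply Finset.card_le_card_of_injOn (fun u => (u.1 - 1) / q)
          · intro u hu
            simp only [Finset.mem_coe, hT, mem_filter, mem_product, mem_Icc] at hu
            obtain ⟨⟨⟨⟨hu11, hu12⟩, hu21, hu22⟩, habs⟩, hum⟩ := hu
            simp only [Finset.mem_coe, Finset.mem_range]
            rw [Nat.div_lt_iff_lt_mul hq0, mul_comm g q, hqg]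
            omega
          · intro u hu v hv heq
            simp only [coe_filter, Set.mem_setOf_eq, hT, mem_filter, mem_product, mem_Icc] at hu hv
            obtain ⟨⟨⟨⟨hu11, hu12⟩, hu21, hu22⟩, habsu⟩, hum⟩ := hu
            obtain ⟨⟨⟨⟨hv11, hv12⟩, hv21, hv22⟩, habsv⟩, hvm⟩ := hv
            have hphi : φ u = φ v := by rw [hum, hvm]
            have h1 : u.1 = v.1 := by
              rcases le_total u.1 v.1 with hle | hle
              · exact main u v hu12 hv12 hu11 hv11 hphi heq hle
              · exact (main v u hv12 hu12 hv11 hu11 hphi.symm heq.symm hle).symm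
            have h2 : u.2 = v.2 := by
              simp only [hφ, h1] at hphi
              have : (u.2 : ℤ) * a = (v.2 : ℤ) * a := by linarith [hphi]
              have haZ : ((a : ℕ) : ℤ) ≠ 0 := by exact_mod_cast (by omega : a ≠ 0)
              exact_mod_cast mul_right_cancel₀ haZ this
            exact Prod.ext h1 h2
      _ = g := Finset.card_range g
  -- put together
  have hTcard : T.card ≤ M.card * g := by
    rw [hcard]
    calc ∑ m ∈ M, (T.filter (fun u => φ u = m)).card ≤ ∑ m ∈ M, g :=
          Finset.sum_le_sum hfib
      _ = M.card * g := by rw [Finset.sum_const, smul_eq_mul]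
  have hBg0 : 0 ≤ B / (g : ℤ) := Int.ediv_nonneg hB0 (le_of_lt hgZ)
  have hMcard : (M.card : ℝ) ≤ 2 * ((B / (g:ℤ) : ℤ) : ℝ) + 1 := by
    have h1 : M.card ≤ (Finset.Icc (-(B / (g:ℤ))) (B / (g:ℤ))).card := Finset.card_image_le
    rw [Int.card_Icc] at h1
    have h2 : ((B / (g:ℤ)) + 1 - (-(B / (g:ℤ)))) = 2 * (B / (g:ℤ)) + 1 := by ring
    rw [h2] at h1
    have h3 : (M.card : ℤ) ≤ 2 * (B / (g:ℤ)) + 1 := by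
      calc (M.card : ℤ) ≤ ((2 * (B / (g:ℤ)) + 1).toNat : ℤ) := by exact_mod_cast h1
        _ = 2 * (B / (g:ℤ)) + 1 := Int.toNat_of_nonneg (by omega)
    exact_mod_cast h3
  have hBgR : ((B / (g:ℤ) : ℤ) : ℝ) ≤ (B : ℝ) / (g : ℝ) := by
    rw [le_div_iff₀ (by exact_mod_cast hg1 : (0:ℝ) < (g:ℝ))]
    exact_mod_cast Int.ediv_mul_le B (by omega : (g:ℤ) ≠ 0)
  have hBR : (B : ℝ) ≤ (a : ℝ) * b / Y := Int.floor_le _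
  have hgR : (0:ℝ) < (g : ℝ) := by exact_mod_cast hg1
  calc (T.card : ℝ) ≤ (M.card : ℝ) * g := by exact_mod_cast hTcard
    _ ≤ (2 * ((B / (g:ℤ) : ℤ) : ℝ) + 1) * g := by
        apply mul_le_mul_of_nonneg_right hMcard (le_of_lt hgR)
    _ ≤ (2 * ((B:ℝ) / (g:ℝ)) + 1) * g := by
        apply mul_le_mul_of_nonneg_right _ (le_of_lt hgR)
        linarith [hBgR]
    _ = 2 * (B:ℝ) + g := by field_simp
    _ ≤ 2 * ((a:ℝ) * b / Y) + g := by linarith [hBR]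
    _ = 2 * (n₁:ℝ)^k * (n₂:ℝ)^k / Y + (Nat.gcd (n₁^k) (n₂^k) : ℝ) := by
        rw [hca, hcb, hg]; ring

lemma gcd_sum_bound' (k N : ℕ) (hk : 1 ≤ k) (hN : 2 ≤ N) :
    ∑ p ∈ Icc 1 N ×ˢ Icc 1 N, (Nat.gcd (p.1 ^ k) (p.2 ^ k) : ℝ)
      ≤ (N : ℝ) ^ (k + 1) * (1 + Real.log N) := by
  classical
  have hmaps : ∀ p ∈ Icc 1 N ×ˢ Icc 1 N, Nat.gcd p.1 p.2 ∈ Icc 1 N := by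
    intro p hp
    simp only [mem_product, mem_Icc] at hp ⊢
    obtain ⟨⟨h11, h12⟩, h21, h22⟩ := hp
    constructor
    · exact Nat.gcd_pos_of_pos_left _ h11
    · exact le_trans (Nat.gcd_le_left _ h11) h12
  rw [← Finset.sum_fiberwise_of_maps_to hmaps]
  have hstep : ∀ d ∈ Icc 1 N,
      ∑ p ∈ (Icc 1 N ×ˢ Icc 1 N).filter (fun p => Nat.gcd p.1 p.2 = d),
        (Nat.gcd (p.1 ^ k) (p.2 ^ k) : ℝ) ≤ (N : ℝ) ^ (k + 1) * (1 / d) := by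
    intro d hd
    simp only [mem_Icc] at hd
    obtain ⟨hd1, hd2⟩ := hd
    have hsum : ∑ p ∈ (Icc 1 N ×ˢ Icc 1 N).filter (fun p => Nat.gcd p.1 p.2 = d),
        (Nat.gcd (p.1 ^ k) (p.2 ^ k) : ℝ)
        = ((Icc 1 N ×ˢ Icc 1 N).filter (fun p => Nat.gcd p.1 p.2 = d)).card * (d : ℝ) ^ k := by
      rw [Finset.sum_congr rfl (fun p hp => ?_), Finset.sum_const, nsmul_eq_mul]
      simp only [mem_filter] at hp
      rw [gcd_pow_eq', hp.2]
      push_cast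
      ring
    rw [hsum]
    have hcard : ((Icc 1 N ×ˢ Icc 1 N).filter (fun p => Nat.gcd p.1 p.2 = d)).card
        ≤ (N / d) ^ 2 := by
      have : ((Icc 1 (N / d) ×ˢ Icc 1 (N / d)).card) = (N / d) ^ 2 := by
        rw [Finset.card_product, Nat.card_Icc]
        norm_num
        exact (pow_two _).symm
      rw [← this]
      apply Finset.card_le_card_of_injOn (fun p => (p.1 / d, p.2 / d))
      · intro p hp
        simp only [Finset.mem_coe, mem_filter, mem_product, mem_Icc] at hp ⊢
        obtain ⟨⟨⟨h11, h12⟩, h21, h22⟩, hgcd⟩ := hp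
        have hdvd1 : d ∣ p.1 := hgcd ▸ Nat.gcd_dvd_left _ _
        have hdvd2 : d ∣ p.2 := hgcd ▸ Nat.gcd_dvd_right _ _
        refine ⟨⟨?_, Nat.div_le_div_right h12⟩, ?_, Nat.div_le_div_right h22⟩
        · rw [Nat.one_le_div_iff (by omega)]; exact Nat.le_of_dvd (by omega) hdvd1
        · rw [Nat.one_le_div_iff (by omega)]; exact Nat.le_of_dvd (by omega) hdvd2
      · intro p hp p' hp' heq
        simp only [coe_filter, Set.mem_setOf_eq, mem_product, mem_Icc] at hp hp'
        have hdvd1 : d ∣ p.1 := hp.2 ▸ Nat.gcd_dvd_left _ _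
        have hdvd2 : d ∣ p.2 := hp.2 ▸ Nat.gcd_dvd_right _ _
        have hdvd1' : d ∣ p'.1 := hp'.2 ▸ Nat.gcd_dvd_left _ _
        have hdvd2' : d ∣ p'.2 := hp'.2 ▸ Nat.gcd_dvd_right _ _
        have e1 : p.1 / d = p'.1 / d := congrArg Prod.fst heq
        have e2 : p.2 / d = p'.2 / d := congrArg Prod.snd heq
        have f1 : p.1 = p'.1 := by
          rw [← Nat.div_mul_cancel hdvd1, ← Nat.div_mul_cancel hdvd1', e1]
        have f2 : p.2 = p'.2 := by
          rw [← Nat.div_mul_cancel hdvd2, ← Nat.div_mul_cancel hdvd2', e2]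
        exact Prod.ext f1 f2
    have hdR : (1 : ℝ) ≤ (d : ℝ) := by exact_mod_cast hd1
    have hNR : (0 : ℝ) < (N : ℝ) := by positivity
    calc (((Icc 1 N ×ˢ Icc 1 N).filter (fun p => Nat.gcd p.1 p.2 = d)).card : ℝ) * (d : ℝ) ^ k
        ≤ (((N / d : ℕ) : ℝ)) ^ 2 * (d : ℝ) ^ k := by
          apply mul_le_mul_of_nonneg_right _ (by positivity)
          have : (((Icc 1 N ×ˢ Icc 1 N).filter (fun p => Nat.gcd p.1 p.2 = d)).card : ℝ)
              ≤ (((N / d) ^ 2 : ℕ) : ℝ) := by exact_mod_cast hcard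
          calc (((Icc 1 N ×ˢ Icc 1 N).filter (fun p => Nat.gcd p.1 p.2 = d)).card : ℝ)
              ≤ (((N / d) ^ 2 : ℕ) : ℝ) := this
            _ = ((N / d : ℕ) : ℝ) ^ 2 := by push_cast; ring
      _ ≤ ((N : ℝ) / d) ^ 2 * (d : ℝ) ^ k := by
          apply mul_le_mul_of_nonneg_right _ (by positivity)
          apply pow_le_pow_left₀ (by positivity)
          exact Nat.cast_div_le
      _ = (N : ℝ) ^ 2 * (d : ℝ) ^ (k - 1) / d := by
          have hdk : (d : ℝ) ^ k = (d : ℝ) ^ (k - 1) * d := by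
            rw [← pow_succ]
            congr 1
            omega
          rw [hdk]
          field_simp
      _ ≤ (N : ℝ) ^ 2 * (N : ℝ) ^ (k - 1) / d := by
          gcongr <;> first
            | exact_mod_cast hd2
            | linarith
      _ = (N : ℝ) ^ (k + 1) * (1 / d) := by
          have : (N : ℝ) ^ (k + 1) = (N : ℝ) ^ 2 * (N : ℝ) ^ (k - 1) := by
            rw [← pow_add]
            congr 1
            omega
          rw [this]
          ring
  calc ∑ d ∈ Icc 1 N, ∑ p ∈ (Icc 1 N ×ˢ Icc 1 N).filter (fun p => Nat.gcd p.1 p.2 = d),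
        (Nat.gcd (p.1 ^ k) (p.2 ^ k) : ℝ)
      ≤ ∑ d ∈ Icc 1 N, (N : ℝ) ^ (k + 1) * (1 / d) := Finset.sum_le_sum hstep
    _ = (N : ℝ) ^ (k + 1) * ∑ d ∈ Icc 1 N, (d : ℝ)⁻¹ := by
        rw [Finset.mul_sum]
        congr 1 with d
        rw [one_div]
    _ ≤ (N : ℝ) ^ (k + 1) * (1 + Real.log N) := by
        apply mul_le_mul_of_nonneg_left _ (by positivity)
        have h1 : ((harmonic N : ℚ) : ℝ) = ∑ d ∈ Icc 1 N, (d : ℝ)⁻¹ := by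
          rw [harmonic_eq_sum_Icc]
          push_cast
          rfl
        rw [← h1]
        exact harmonic_le_one_add_log N

theorem fractions_power_denominator_main
    (k : ℕ) (hk : 1 ≤ k) (ε : ℝ) (hε : 0 < ε) :
    ∃ C : ℝ, 0 < C ∧ ∀ N : ℕ, 2 ≤ N → ∀ Y : ℝ, 0 < Y →
      ((((Finset.Icc 1 N ×ˢ Finset.Icc 1 N) ×ˢ
          (Finset.Icc 1 (N ^ k) ×ˢ Finset.Icc 1 (N ^ k))).filter
        (fun q : (ℕ × ℕ) × (ℕ × ℕ) =>
          q.2.1 ≤ q.1.1 ^ k ∧ q.2.2 ≤ q.1.2 ^ k ∧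
          |(q.2.1 : ℝ) / (q.1.1 : ℝ) ^ k - (q.2.2 : ℝ) / (q.1.2 : ℝ) ^ k| ≤ 1 / Y)).card : ℝ)
      ≤ C * ((N : ℝ) ^ (2 * k + 2) / Y + (N : ℝ) ^ (k + 1)) * (N : ℝ) ^ ε := by
  classical
  refine ⟨3 + 1 / ε, by positivity, ?_⟩
  intro N hN Y hY
  set S := (((Finset.Icc 1 N ×ˢ Finset.Icc 1 N) ×ˢ
          (Finset.Icc 1 (N ^ k) ×ˢ Finset.Icc 1 (N ^ k))).filter
        (fun q : (ℕ × ℕ) × (ℕ × ℕ) =>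
          q.2.1 ≤ q.1.1 ^ k ∧ q.2.2 ≤ q.1.2 ^ k ∧
          |(q.2.1 : ℝ) / (q.1.1 : ℝ) ^ k - (q.2.2 : ℝ) / (q.1.2 : ℝ) ^ k| ≤ 1 / Y)) with hS
  have hmaps : ∀ q ∈ S, q.1 ∈ Icc 1 N ×ˢ Icc 1 N := by
    intro q hq
    simp only [hS, mem_filter] at hq
    exact (Finset.mem_product.mp hq.1).1
  have hcard : S.card = ∑ n ∈ Icc 1 N ×ˢ Icc 1 N, (S.filter (fun q => q.1 = n)).card :=
    Finset.card_eq_sum_card_fiberwise hmaps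
  have hfiber : ∀ n ∈ Icc 1 N ×ˢ Icc 1 N,
      ((S.filter (fun q => q.1 = n)).card : ℝ)
        ≤ 2 * (n.1 : ℝ) ^ k * (n.2 : ℝ) ^ k / Y + (Nat.gcd (n.1 ^ k) (n.2 ^ k) : ℝ) := by
    intro n hn
    simp only [mem_product, mem_Icc] at hn
    obtain ⟨⟨hn11, hn12⟩, hn21, hn22⟩ := hn
    have hinj : (S.filter (fun q => q.1 = n)).card ≤
        ((Icc 1 (n.1 ^ k) ×ˢ Icc 1 (n.2 ^ k)).filter (fun u : ℕ × ℕ =>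
          |(u.1 : ℝ) / (n.1 : ℝ) ^ k - (u.2 : ℝ) / (n.2 : ℝ) ^ k| ≤ 1 / Y)).card := by
      apply Finset.card_le_card_of_injOn Prod.snd
      · intro q hq
        simp only [Finset.mem_coe, hS, mem_filter, mem_product, mem_Icc] at hq
        obtain ⟨⟨⟨⟨hq11, hq12⟩, hu1, hu2⟩, hle1, hle2, habs⟩, heq⟩ := hq
        simp only [Finset.mem_coe, mem_filter, mem_product, mem_Icc]
        rw [heq] at hle1 hle2 habs
        exact ⟨⟨⟨hu1.1, hle1⟩, hu2.1, hle2⟩, habs⟩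
      · intro q hq q' hq' heq2
        simp only [coe_filter, Set.mem_setOf_eq] at hq hq'
        exact Prod.ext (hq.2.trans hq'.2.symm) heq2
    calc ((S.filter (fun q => q.1 = n)).card : ℝ)
        ≤ (((Icc 1 (n.1 ^ k) ×ˢ Icc 1 (n.2 ^ k)).filter (fun u : ℕ × ℕ =>
          |(u.1 : ℝ) / (n.1 : ℝ) ^ k - (u.2 : ℝ) / (n.2 : ℝ) ^ k| ≤ 1 / Y)).card : ℝ) := by
          exact_mod_cast hinj
      _ ≤ _ := pair_bound' k n.1 n.2 hn11 hn21 Y hY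
  have hNR : (0 : ℝ) < (N : ℝ) := by positivity
  have hNR2 : (2 : ℝ) ≤ (N : ℝ) := by exact_mod_cast hN
  set E := (N : ℝ) ^ ε with hE
  have hE0 : 0 < E := Real.rpow_pos_of_pos hNR ε
  have hE1 : (1 : ℝ) ≤ E := by
    calc (1 : ℝ) = (1 : ℝ) ^ ε := (Real.one_rpow ε).symm
      _ ≤ (N : ℝ) ^ ε := Real.rpow_le_rpow zero_le_one (by linarith) hε.le
  have hlog : Real.log N ≤ E / ε := by
    have h1 : Real.log E ≤ E - 1 := Real.log_le_sub_one_of_pos hE0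
    rw [hE, Real.log_rpow hNR] at h1
    rw [le_div_iff₀ hε]
    linarith [h1]
  set A := (N : ℝ) ^ (2 * k + 2) / Y with hA
  set B := (N : ℝ) ^ (k + 1) with hB
  have hA0 : 0 ≤ A := by positivity
  have hB0 : 0 ≤ B := by positivity
  have hsum1 : ∑ n ∈ Icc 1 N ×ˢ Icc 1 N, (2 * (n.1 : ℝ) ^ k * (n.2 : ℝ) ^ k / Y) ≤ 2 * A := by
    have hper : ∀ n ∈ Icc 1 N ×ˢ Icc 1 N,
        2 * (n.1 : ℝ) ^ k * (n.2 : ℝ) ^ k / Y ≤ 2 * (N : ℝ) ^ k * (N : ℝ) ^ k / Y := by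
      intro n hn
      simp only [mem_product, mem_Icc] at hn
      obtain ⟨⟨h11, h12⟩, h21, h22⟩ := hn
      have c1 : (n.1 : ℝ) ≤ N := by exact_mod_cast h12
      have c2 : (n.2 : ℝ) ≤ N := by exact_mod_cast h22
      gcongr <;> first
        | exact c1
        | exact c2
    calc ∑ n ∈ Icc 1 N ×ˢ Icc 1 N, (2 * (n.1 : ℝ) ^ k * (n.2 : ℝ) ^ k / Y)
        ≤ ∑ _n ∈ Icc 1 N ×ˢ Icc 1 N, (2 * (N : ℝ) ^ k * (N : ℝ) ^ k / Y) :=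
          Finset.sum_le_sum hper
      _ = ((Icc 1 N ×ˢ Icc 1 N).card : ℝ) * (2 * (N : ℝ) ^ k * (N : ℝ) ^ k / Y) := by
          rw [Finset.sum_const, nsmul_eq_mul]
      _ = (N : ℝ) ^ 2 * (2 * (N : ℝ) ^ k * (N : ℝ) ^ k / Y) := by
          rw [Finset.card_product, Nat.card_Icc, show N + 1 - 1 = N from by omega]
          push_cast
          ring
      _ = 2 * A := by rw [hA]; field_simp; ring
  calc (S.card : ℝ)
      = ∑ n ∈ Icc 1 N ×ˢ Icc 1 N, ((S.filter (fun q => q.1 = n)).card : ℝ) := by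
        rw [hcard]; push_cast; ring
    _ ≤ ∑ n ∈ Icc 1 N ×ˢ Icc 1 N,
          (2 * (n.1 : ℝ) ^ k * (n.2 : ℝ) ^ k / Y + (Nat.gcd (n.1 ^ k) (n.2 ^ k) : ℝ)) :=
        Finset.sum_le_sum hfiber
    _ = (∑ n ∈ Icc 1 N ×ˢ Icc 1 N, 2 * (n.1 : ℝ) ^ k * (n.2 : ℝ) ^ k / Y)
        + ∑ n ∈ Icc 1 N ×ˢ Icc 1 N, (Nat.gcd (n.1 ^ k) (n.2 ^ k) : ℝ) :=
        Finset.sum_add_distrib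
    _ ≤ 2 * A + B * (1 + Real.log N) := by
        have := gcd_sum_bound' k N hk hN
        have h2 := hsum1
        rw [hB]
        linarith [this, h2]
    _ ≤ 2 * A + B * (1 + E / ε) := by
        have : B * (1 + Real.log N) ≤ B * (1 + E / ε) := by
          apply mul_le_mul_of_nonneg_left _ hB0
          linarith [hlog]
        linarith [this]
    _ ≤ (3 + 1 / ε) * (A + B) * E := by
        have hAE : 0 ≤ A * (E - 1) := mul_nonneg hA0 (by linarith)
        have hBE : 0 ≤ B * (E - 1) := mul_nonneg hB0 (by linarith)
        have hAEe : 0 ≤ A * E / ε := by positivity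
        have expand : (3 + 1 / ε) * (A + B) * E
            = 3 * (A * E) + 3 * (B * E) + (A * E) / ε + (B * E) / ε := by
          field_simp
          ring
        rw [expand]
        have h1 : B * (1 + E / ε) = B + (B * E) / ε := by ring
        rw [h1]
        nlinarith [hAE, hBE, hAEe, mul_nonneg hA0 hE0.le, mul_nonneg hB0 hE0.le]
end

section
/- For every integer k ≥ 1 and all real ε > 0 and δ > 0 there exists a constant C = C(k, ε, δ) such that for all integers N ≥ 2, the Lebesgue measure of the set of x ∈ [0,1] with I_{k,N}(x, N^{k+1}) ≥ N^ε is at most C · N^{−ε+δ}. -/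
/-!
Markov's inequality applied to the counting function `x ↦ #{z : ‖z - x‖ ≤ N^{-(k+1)}}`.
There are at most `N^{k+1}` fractions `u / n^k`, and a closed ball of radius `r` in `ℝ/ℤ` has
measure at most `2r`, so the integral of the counting function over `[0, 1]` is at most `2`;
hence the set where it reaches `N^ε` has measure at most `2 N^{-ε}`.
-/

open MeasureTheory Finset

def unitIntervalNear (z c : ℝ) : Set ℝ :=
  Set.Icc 0 1 ∩ (↑) ⁻¹' Metric.closedBall (z : UnitAddCircle) c

lemma mem_unitIntervalNear {z c x : ℝ} :
    x ∈ unitIntervalNear z c ↔ x ∈ Set.Icc 0 1 ∧ |(z - x) - round (z - x)| ≤ c := by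
  rw [unitIntervalNear, Set.mem_inter_iff, Set.mem_preimage, Metric.mem_closedBall, dist_comm,
    dist_eq_norm, ← QuotientAddGroup.mk_sub, UnitAddCircle.norm_eq]

lemma measurableSet_unitIntervalNear (z c : ℝ) : MeasurableSet (unitIntervalNear z c) :=
  measurableSet_Icc.inter
    (measurableSet_closedBall.preimage (UnitAddCircle.measurePreserving_mk 0).measurable)

lemma volume_unitIntervalNear_le (z c : ℝ) :
    volume (unitIntervalNear z c) ≤ ENNReal.ofReal (2 * c) :=
  calc volume (unitIntervalNear z c)
      = volume.restrict (Set.Ioc 0 (0 + 1))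
          (((↑) : ℝ → UnitAddCircle) ⁻¹' Metric.closedBall (z : UnitAddCircle) c) := by
        rw [Measure.restrict_apply' measurableSet_Ioc, zero_add, Set.inter_comm, unitIntervalNear]
        exact measure_congr (Ioc_ae_eq_Icc.inter .rfl).symm
    _ = ENNReal.ofReal (min 1 (2 * c)) := by
        rw [(UnitAddCircle.measurePreserving_mk 0).measure_preimage
          measurableSet_closedBall.nullMeasurableSet, AddCircle.volume_closedBall]
    _ ≤ ENNReal.ofReal (2 * c) := ENNReal.ofReal_le_ofReal (min_le_right _ _)

open scoped Classical in
lemma mul_measure_le_card_filter_mem_le_sum {α ι : Type*} [MeasurableSpace α] (μ : Measure α)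
    (F : Finset ι) {A : ι → Set α} (hA : ∀ i ∈ F, MeasurableSet (A i)) (t : ENNReal) :
    t * μ {x | t ≤ #{i ∈ F | x ∈ A i}} ≤ ∑ i ∈ F, μ (A i) := by
  have hcount (x : α) : (#{i ∈ F | x ∈ A i} : ENNReal) = ∑ i ∈ F, (A i).indicator 1 x := by
    simp only [Set.indicator_apply, Pi.one_apply, Finset.sum_boole]
  have hmeas : ∀ i ∈ F, Measurable ((A i).indicator (1 : α → ENNReal)) :=
    fun i hi => measurable_one.indicator (hA i hi)
  calc t * μ {x | t ≤ #{i ∈ F | x ∈ A i}}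
      ≤ ∫⁻ x, ∑ i ∈ F, (A i).indicator 1 x ∂μ := by
        simp_rw [hcount]
        exact mul_meas_ge_le_lintegral₀ (Finset.measurable_sum _ hmeas).aemeasurable t
    _ = ∑ i ∈ F, μ (A i) := by
        rw [lintegral_finsetSum _ hmeas]
        exact Finset.sum_congr rfl fun i hi => lintegral_indicator_one (hA i hi)

noncomputable def powDenomFractions (k N : ℕ) : Finset ℝ :=
  (Icc 1 N ×ˢ Icc 1 (N ^ k)).image fun p => (p.2 : ℝ) / (p.1 : ℝ) ^ k

lemma card_powDenomFractions_le (k N : ℕ) : #(powDenomFractions k N) ≤ N ^ (k + 1) :=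
  calc #(powDenomFractions k N) ≤ #(Icc 1 N ×ˢ Icc 1 (N ^ k)) := card_image_le
    _ = N ^ (k + 1) := by
      rw [card_product, Nat.card_Icc, Nat.card_Icc, Nat.add_sub_cancel, Nat.add_sub_cancel,
        pow_succ, mul_comm]

lemma div_pow_mem_powDenomFractions {k N n u : ℕ} (hn : 1 ≤ n) (hnN : n ≤ N) (hu : 1 ≤ u)
    (hun : u ≤ n ^ k) : (u : ℝ) / (n : ℝ) ^ k ∈ powDenomFractions k N :=
  mem_image.2 ⟨(n, u), mem_product.2 ⟨mem_Icc.2 ⟨hn, hnN⟩,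
    mem_Icc.2 ⟨hu, hun.trans (Nat.pow_le_pow_left hnN k)⟩⟩, rfl⟩

open scoped Classical in
lemma natCard_near_le_card_filter_unitIntervalNear {k N : ℕ} {x c : ℝ} (hx : x ∈ Set.Icc 0 1) :
    Nat.card {z : ℝ |
      (∃ n u : ℕ, 1 ≤ n ∧ n ≤ N ∧ 1 ≤ u ∧ u ≤ n ^ k ∧ Nat.gcd u n = 1 ∧
        z = (u : ℝ) / (n : ℝ) ^ k) ∧ |(z - x) - (round (z - x) : ℝ)| ≤ c} ≤
      #{z ∈ powDenomFractions k N | x ∈ unitIntervalNear z c} := by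
  rw [Nat.card_coe_set_eq, ← Set.ncard_coe_finset]
  refine Set.ncard_le_ncard ?_ (Finset.finite_toSet _)
  rintro z ⟨⟨n, u, hn, hnN, hu, hun, -, rfl⟩, hnear⟩
  exact mem_filter.2
    ⟨div_pow_mem_powDenomFractions hn hnN hu hun, mem_unitIntervalNear.2 ⟨hx, hnear⟩⟩

lemma sum_volume_unitIntervalNear_powDenomFractions_le (k : ℕ) {N : ℕ} (hN : 1 ≤ N) :
    ∑ z ∈ powDenomFractions k N, volume (unitIntervalNear z (1 / (N : ℝ) ^ (k + 1))) ≤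
      ENNReal.ofReal 2 :=
  calc ∑ z ∈ powDenomFractions k N, volume (unitIntervalNear z (1 / (N : ℝ) ^ (k + 1)))
      ≤ #(powDenomFractions k N) • ENNReal.ofReal (2 * (1 / (N : ℝ) ^ (k + 1))) :=
        sum_le_card_nsmul _ _ _ fun z _ => volume_unitIntervalNear_le z _
    _ ≤ (N ^ (k + 1) : ℕ) • ENNReal.ofReal (2 * (1 / (N : ℝ) ^ (k + 1))) := by
        gcongr
        exact card_powDenomFractions_le k N
    _ = ENNReal.ofReal 2 := by
        rw [nsmul_eq_mul, ← ENNReal.ofReal_natCast, ← ENNReal.ofReal_mul (by positivity),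
          Nat.cast_pow, mul_left_comm, mul_one_div_cancel (by positivity), mul_one]

theorem zhao_conjecture_outside_small_set_general
    (k : ℕ) (ε δ : ℝ) (hδ : 0 < δ) :
    ∃ C : ℝ, 0 < C ∧ ∀ N : ℕ, 2 ≤ N →
      volume {x : ℝ | x ∈ Set.Icc (0 : ℝ) 1 ∧
        (N : ℝ) ^ ε ≤
          (Nat.card {z : ℝ |
            (∃ n u : ℕ, 1 ≤ n ∧ n ≤ N ∧ 1 ≤ u ∧ u ≤ n ^ k ∧ Nat.gcd u n = 1 ∧
              z = (u : ℝ) / (n : ℝ) ^ k) ∧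
            |(z - x) - (round (z - x) : ℝ)| ≤ 1 / (N : ℝ) ^ (k + 1)} : ℝ)}
      ≤ ENNReal.ofReal (C * (N : ℝ) ^ (-ε + δ)) := by
  classical
  refine ⟨2, two_pos, fun N hN => ?_⟩
  have hN1 : 1 ≤ N := one_le_two.trans hN
  have hNε : 0 < (N : ℝ) ^ ε := by positivity
  set t := ENNReal.ofReal ((N : ℝ) ^ ε)
  set c : ℝ := 1 / (N : ℝ) ^ (k + 1)
  set F := powDenomFractions k N
  calc volume _ ≤ volume {x | t ≤ #{z ∈ F | x ∈ unitIntervalNear z c}} :=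
        measure_mono <| by
          rintro x ⟨hx, hcount⟩
          rw [Set.mem_ofPred_eq, ← ENNReal.ofReal_natCast]
          exact ENNReal.ofReal_le_ofReal
            (hcount.trans (by exact_mod_cast natCard_near_le_card_filter_unitIntervalNear hx))
    _ ≤ ENNReal.ofReal 2 / t := by
        rw [ENNReal.le_div_iff_mul_le (.inl (ENNReal.ofReal_pos.2 hNε).ne')
          (.inl ENNReal.ofReal_ne_top), mul_comm]
        exact (mul_measure_le_card_filter_mem_le_sum _ F
          (fun z _ => measurableSet_unitIntervalNear z c) t).trans
          (sum_volume_unitIntervalNear_powDenomFractions_le k hN1)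
    _ = ENNReal.ofReal (2 * (N : ℝ) ^ (-ε)) := by
        rw [← ENNReal.ofReal_div_of_pos hNε, Real.rpow_neg (by positivity), div_eq_mul_inv]
    _ ≤ ENNReal.ofReal (2 * (N : ℝ) ^ (-ε + δ)) :=
        ENNReal.ofReal_le_ofReal (by gcongr; exacts [mod_cast hN1, by linarith])

theorem zhao_conjecture_outside_small_set
    (k : ℕ) (hk : 1 ≤ k) (ε δ : ℝ) (hε : 0 < ε) (hδ : 0 < δ) :
    ∃ C : ℝ, 0 < C ∧ ∀ N : ℕ, 2 ≤ N →
      volume {x : ℝ | x ∈ Set.Icc (0 : ℝ) 1 ∧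
        (N : ℝ) ^ ε ≤
          (Nat.card {z : ℝ |
            (∃ n u : ℕ, 1 ≤ n ∧ n ≤ N ∧ 1 ≤ u ∧ u ≤ n ^ k ∧ Nat.gcd u n = 1 ∧
              z = (u : ℝ) / (n : ℝ) ^ k) ∧
            |(z - x) - (round (z - x) : ℝ)| ≤ 1 / (N : ℝ) ^ (k + 1)} : ℝ)}
      ≤ ENNReal.ofReal (C * (N : ℝ) ^ (-ε + δ)) :=
  zhao_conjecture_outside_small_set_general k ε δ hδ
end

section
/- There is an absolute constant C such that the following holds. Let I₁ and I₂ be finite intervals, let φ : I₁ × I₂ → ℝ, and let Y and Z be positive real numbers with Z ≤ Y. Then (1/Y) ∫_{−Y}^{Y} | Σ_{n ∈ I₁} Σ_{u ∈ I₂} e(y φ(n,u)) |² dy ≤ C · (1/Z) ∫_{−Z}^{Z} | Σ_{n ∈ I₁} Σ_{u ∈ I₂} e(y φ(n,u)) |² dy. -/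
open Finset

noncomputable def e (x : ℝ) : ℂ := Complex.exp (2 * Real.pi * Complex.I * x)

open Real in
/-- The Fejér-type kernel value: `∫ y in -T..T, (1 - |y|/T) cos(2π y δ)`. -/
noncomputable def G (T δ : ℝ) : ℝ :=
  if δ = 0 then T else (1 - Real.cos (2 * π * δ * T)) / (2 * π ^ 2 * δ ^ 2 * T)

open Real in
private lemma abs_sin_nmul (k : ℕ) (x : ℝ) :
    |Real.sin ((k : ℝ) * x)| ≤ (k : ℝ) * |Real.sin x| := by
  induction k with
  | zero => simp
  | succ m ih =>
    push_cast
    rw [show ((m : ℝ) + 1) * x = (m : ℝ) * x + x by ring, Real.sin_add]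
    have h1 := abs_add_le (Real.sin ((m : ℝ) * x) * Real.cos x)
      (Real.cos ((m : ℝ) * x) * Real.sin x)
    rw [abs_mul, abs_mul] at h1
    have h2 := Real.abs_cos_le_one x
    have h3 := Real.abs_cos_le_one ((m : ℝ) * x)
    have h4 := abs_nonneg (Real.sin ((m : ℝ) * x))
    have h5 := abs_nonneg (Real.sin x)
    push_cast at ih
    nlinarith

open Real in
private lemma int_0T {T a : ℝ} (hT : 0 < T) (ha : a ≠ 0) :
    ∫ y in (0:ℝ)..T, (1 - y / T) * Real.cos (a * y)
      = (1 - Real.cos (a * T)) / (a ^ 2 * T) := by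
  have hderiv : ∀ y ∈ Set.uIcc (0:ℝ) T,
      HasDerivAt (fun y => (1 - y / T) * (Real.sin (a * y) / a)
        - Real.cos (a * y) / (a ^ 2 * T)) ((1 - y / T) * Real.cos (a * y)) y := by
    intro y _
    have h1 : HasDerivAt (fun y : ℝ => 1 - y / T) (-(1 / T)) y := by
      simpa using ((hasDerivAt_id y).div_const T).const_sub 1
    have h2 : HasDerivAt (fun y : ℝ => a * y) a y := by
      simpa using (hasDerivAt_id y).const_mul a
    have hsin : HasDerivAt (fun y : ℝ => Real.sin (a * y)) (Real.cos (a * y) * a) y := h2.sin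
    have hcos : HasDerivAt (fun y : ℝ => Real.cos (a * y)) (-Real.sin (a * y) * a) y := h2.cos
    have hmain := (h1.mul (hsin.div_const a)).sub (hcos.div_const (a ^ 2 * T))
    refine hmain.congr_deriv ?_
    field_simp
    ring
  rw [intervalIntegral.integral_eq_sub_of_hasDerivAt hderiv
    (Continuous.intervalIntegrable (by fun_prop) _ _)]
  have hT' : T ≠ 0 := hT.ne'
  simp only [mul_zero, Real.sin_zero, Real.cos_zero, zero_div]
  field_simp
  ring

open Real in
private lemma tri_int {T : ℝ} (hT : 0 < T) (δ : ℝ) :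
    ∫ y in (-T)..T, (1 - |y| / T) * Real.cos (2 * π * (y * δ)) = G T δ := by
  have hT' : T ≠ 0 := hT.ne'
  have hint : ∀ u v : ℝ, IntervalIntegrable
      (fun y => (1 - |y| / T) * Real.cos (2 * π * (y * δ))) MeasureTheory.volume u v := by
    intro u v
    apply Continuous.intervalIntegrable
    fun_prop
  have hsplit : (∫ y in (-T)..T, (1 - |y| / T) * Real.cos (2 * π * (y * δ)))
      = (∫ y in (-T)..(0:ℝ), (1 - |y| / T) * Real.cos (2 * π * (y * δ)))
        + ∫ y in (0:ℝ)..T, (1 - |y| / T) * Real.cos (2 * π * (y * δ)) :=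
    (intervalIntegral.integral_add_adjacent_intervals (hint _ _) (hint _ _)).symm
  have hneg : (∫ y in (-T)..(0:ℝ), (1 - |y| / T) * Real.cos (2 * π * (y * δ)))
      = ∫ y in (0:ℝ)..T, (1 - |y| / T) * Real.cos (2 * π * (y * δ)) := by
    have h := intervalIntegral.integral_comp_neg (a := (0:ℝ)) (b := T)
      (fun y => (1 - |y| / T) * Real.cos (2 * π * (y * δ)))
    rw [neg_zero] at h
    rw [← h]
    apply intervalIntegral.integral_congr
    intro x _
    simp only [abs_neg]
    rw [show 2 * π * (-x * δ) = -(2 * π * (x * δ)) by ring, Real.cos_neg]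
  have habs : (∫ y in (0:ℝ)..T, (1 - |y| / T) * Real.cos (2 * π * (y * δ)))
      = ∫ y in (0:ℝ)..T, (1 - y / T) * Real.cos (2 * π * (y * δ)) := by
    apply intervalIntegral.integral_congr
    intro x hx
    rw [Set.uIcc_of_le hT.le] at hx
    simp only [abs_of_nonneg hx.1]
  rw [hsplit, hneg, habs]
  by_cases hδ : δ = 0
  · subst hδ
    simp only [mul_zero, Real.cos_zero, mul_one, G, if_pos]
    have h1 : (∫ y in (0:ℝ)..T, (1 - y / T))
        = (∫ y in (0:ℝ)..T, (1:ℝ)) - ∫ y in (0:ℝ)..T, y / T := by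
      apply intervalIntegral.integral_sub
      · exact intervalIntegrable_const
      · exact Continuous.intervalIntegrable (by fun_prop) _ _
    rw [h1, intervalIntegral.integral_div, integral_id, integral_one]
    field_simp
    ring
  · have hform : (∫ y in (0:ℝ)..T, (1 - y / T) * Real.cos (2 * π * (y * δ)))
        = ∫ y in (0:ℝ)..T, (1 - y / T) * Real.cos ((2 * π * δ) * y) := by
      apply intervalIntegral.integral_congr
      intro x _
      ring_nf
    have ha : (2 * π * δ) ≠ 0 := by
      have : π ≠ 0 := Real.pi_ne_zero
      positivity
    rw [hform, int_0T hT ha, G, if_neg hδ]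
    have hpi : π ≠ 0 := Real.pi_ne_zero
    field_simp
    ring


open Real in
private lemma abs_sq_eq_cos_sum {ι : Type*} (A : Finset ι) (θ : ι → ℝ) (y : ℝ) :
    ‖∑ p ∈ A, e (y * θ p)‖ ^ 2
      = ∑ r ∈ A ×ˢ A, Real.cos (2 * π * (y * (θ r.1 - θ r.2))) := by
  rw [Finset.sum_product]
  have h0 : (‖∑ p ∈ A, e (y * θ p)‖) ^ 2
      = ((∑ p ∈ A, e (y * θ p)) * (starRingEnd ℂ) (∑ p ∈ A, e (y * θ p))).re := by
    rw [Complex.mul_conj]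
    simp [Complex.sq_norm]
  rw [h0, map_sum, Finset.sum_mul_sum]
  rw [Complex.re_sum]
  refine Finset.sum_congr rfl fun p _ => ?_
  rw [Complex.re_sum]
  refine Finset.sum_congr rfl fun q _ => ?_
  have e_eq : ∀ x : ℝ, e x = Complex.exp (((2 * π * x : ℝ) : ℂ) * Complex.I) := by
    intro x
    unfold e
    congr 1
    push_cast
    ring
  rw [e_eq, e_eq, ← Complex.exp_conj, map_mul, Complex.conj_ofReal, Complex.conj_I,
    ← Complex.exp_add]
  have harg : ((2 * π * (y * θ p) : ℝ) : ℂ) * Complex.I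
        + ((2 * π * (y * θ q) : ℝ) : ℂ) * (-Complex.I)
      = ((2 * π * (y * (θ p - θ q)) : ℝ) : ℂ) * Complex.I := by
    push_cast
    ring
  rw [harg, Complex.exp_ofReal_mul_I_re]

open Real in
private lemma tri_sum_int {ι : Type*} (B : Finset ι) (d : ι → ℝ) {T : ℝ} (hT : 0 < T) :
    (∫ y in (-T)..T, (1 - |y| / T) * ∑ b ∈ B, Real.cos (2 * π * (y * d b)))
      = ∑ b ∈ B, G T (d b) := by
  have h1 : (∫ y in (-T)..T, (1 - |y| / T) * ∑ b ∈ B, Real.cos (2 * π * (y * d b)))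
      = ∫ y in (-T)..T, ∑ b ∈ B, (1 - |y| / T) * Real.cos (2 * π * (y * d b)) := by
    apply intervalIntegral.integral_congr
    intro x _
    simp [Finset.mul_sum]
  rw [h1, intervalIntegral.integral_finset_sum]
  · exact Finset.sum_congr rfl fun b _ => tri_int hT (d b)
  · intro b _
    exact Continuous.intervalIntegrable (by fun_prop) _ _

open Real in
private lemma G_comp {Z : ℝ} (hZ : 0 < Z) (n : ℕ) (hn : 1 ≤ n) (δ : ℝ) :
    G ((n : ℝ) * Z) δ ≤ (n : ℝ) * G Z δ := by
  have hn' : (0:ℝ) < n := by exact_mod_cast hn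
  by_cases hδ : δ = 0
  · subst hδ
    simp [G]
  · rw [G, if_neg hδ, G, if_neg hδ]
    have hδ2 : (0:ℝ) < δ ^ 2 := by
      have := sq_nonneg δ
      rcases this.lt_or_eq with h | h
      · exact h
      · exact absurd (pow_eq_zero_iff (n := 2) (by norm_num) |>.mp h.symm) hδ
    have hpi : (0:ℝ) < π := Real.pi_pos
    have hnum : 1 - Real.cos (2 * π * δ * ((n:ℝ) * Z))
        ≤ (n:ℝ) ^ 2 * (1 - Real.cos (2 * π * δ * Z)) := by
      have e1 : 1 - Real.cos (2 * π * δ * ((n:ℝ) * Z)) = 2 * Real.sin ((n:ℝ) * (π * δ * Z)) ^ 2 := by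
        have := Real.sin_sq_eq_half_sub ((n:ℝ) * (π * δ * Z))
        rw [show 2 * ((n:ℝ) * (π * δ * Z)) = 2 * π * δ * ((n:ℝ) * Z) by ring] at this
        linarith
      have e2 : 1 - Real.cos (2 * π * δ * Z) = 2 * Real.sin (π * δ * Z) ^ 2 := by
        have := Real.sin_sq_eq_half_sub (π * δ * Z)
        rw [show 2 * (π * δ * Z) = 2 * π * δ * Z by ring] at this
        linarith
      rw [e1, e2]
      have h3 := abs_sin_nmul n (π * δ * Z)
      have h4 : Real.sin ((n:ℝ) * (π * δ * Z)) ^ 2 ≤ ((n:ℝ) * |Real.sin (π * δ * Z)|) ^ 2 := by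
        rw [← sq_abs]
        apply pow_le_pow_left₀ (abs_nonneg _) h3
      rw [mul_pow, sq_abs] at h4
      nlinarith
    have hden : (0:ℝ) < 2 * π ^ 2 * δ ^ 2 * ((n:ℝ) * Z) := by positivity
    calc (1 - Real.cos (2 * π * δ * ((n:ℝ) * Z))) / (2 * π ^ 2 * δ ^ 2 * ((n:ℝ) * Z))
        ≤ ((n:ℝ) ^ 2 * (1 - Real.cos (2 * π * δ * Z))) / (2 * π ^ 2 * δ ^ 2 * ((n:ℝ) * Z)) := by
          gcongr
      _ = (n:ℝ) * ((1 - Real.cos (2 * π * δ * Z)) / (2 * π ^ 2 * δ ^ 2 * Z)) := by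
          field_simp


open Real in
private lemma key_ineq {ι : Type*} (B : Finset ι) (d : ι → ℝ) {Y Z : ℝ}
    (hZ : 0 < Z) (hY : 0 < Y) (hZY : Z ≤ Y)
    (hF : ∀ y : ℝ, 0 ≤ ∑ b ∈ B, Real.cos (2 * π * (y * d b))) :
    (1 / Y) * ∫ y in (-Y)..Y, ∑ b ∈ B, Real.cos (2 * π * (y * d b))
      ≤ 8 * ((1 / Z) * ∫ y in (-Z)..Z, ∑ b ∈ B, Real.cos (2 * π * (y * d b))) := by
  set F : ℝ → ℝ := fun y => ∑ b ∈ B, Real.cos (2 * π * (y * d b)) with hFdef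
  have hFcont : Continuous F := by
    apply continuous_finset_sum
    intro b _
    fun_prop
  set n : ℕ := 2 * ⌈Y / Z⌉₊ with hndef
  have hYZ1 : (1:ℝ) ≤ Y / Z := (one_le_div hZ).mpr hZY
  have hceil : (Y / Z) ≤ (⌈Y / Z⌉₊ : ℝ) := Nat.le_ceil _
  have hceil2 : (⌈Y / Z⌉₊ : ℝ) < Y / Z + 1 := Nat.ceil_lt_add_one (by linarith)
  have hn1 : 1 ≤ n := by
    have : (1:ℕ) ≤ ⌈Y / Z⌉₊ := Nat.one_le_ceil_iff.mpr (by positivity)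
    omega
  have hncast : (n : ℝ) = 2 * (⌈Y / Z⌉₊ : ℝ) := by push_cast [hndef]; ring
  set T : ℝ := (n : ℝ) * Z with hTdef
  have hT2Y : 2 * Y ≤ T := by
    rw [hTdef, hncast]
    have : 2 * (Y / Z) * Z ≤ 2 * (⌈Y / Z⌉₊ : ℝ) * Z := by
      have := mul_le_mul_of_nonneg_right (mul_le_mul_of_nonneg_left hceil (by norm_num : (0:ℝ) ≤ 2)) hZ.le
      linarith
    have h0 : 2 * (Y / Z) * Z = 2 * Y := by field_simp
    linarith
  have hT4Y : T ≤ 4 * Y := by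
    rw [hTdef, hncast]
    have h1 : 2 * (⌈Y / Z⌉₊ : ℝ) * Z ≤ 2 * (Y / Z + 1) * Z :=
      mul_le_mul_of_nonneg_right (by linarith) hZ.le
    have h2 : 2 * (Y / Z + 1) * Z = 2 * Y + 2 * Z := by field_simp
    have h3 : Z ≤ Y := hZY
    rw [h2] at h1
    linarith
  have hT : 0 < T := by linarith
  have hint : ∀ u v : ℝ, IntervalIntegrable (fun y => (1 - |y| / T) * F y)
      MeasureTheory.volume u v := fun u v =>
    Continuous.intervalIntegrable ((continuous_const.sub (continuous_abs.div_const T)).mul hFcont) _ _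
  have hFint : ∀ u v : ℝ, IntervalIntegrable F MeasureTheory.volume u v := fun u v =>
    hFcont.intervalIntegrable _ _
  -- Step 2: ∫_{-Y}^{Y} F ≤ 2 ∫_{-T}^{T} (1-|y|/T) F
  have hsplit : (∫ y in (-T)..T, (1 - |y| / T) * F y)
      = (∫ y in (-T)..(-Y), (1 - |y| / T) * F y)
        + ((∫ y in (-Y)..Y, (1 - |y| / T) * F y) + ∫ y in Y..T, (1 - |y| / T) * F y) := by
    rw [intervalIntegral.integral_add_adjacent_intervals (hint _ _) (hint _ _),
      intervalIntegral.integral_add_adjacent_intervals (hint _ _) (hint _ _)]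
  have hYT : Y ≤ T := by linarith
  have hleft : 0 ≤ ∫ y in (-T)..(-Y), (1 - |y| / T) * F y := by
    apply intervalIntegral.integral_nonneg (by linarith)
    intro u hu
    have h1 : |u| ≤ T := by
      rw [abs_le]; exact ⟨hu.1, by linarith [hu.2]⟩
    have : (0:ℝ) ≤ 1 - |u| / T := by
      rw [sub_nonneg, div_le_one hT]; exact h1
    exact mul_nonneg this (hF u)
  have hright : 0 ≤ ∫ y in Y..T, (1 - |y| / T) * F y := by
    apply intervalIntegral.integral_nonneg hYT
    intro u hu
    have h1 : |u| ≤ T := by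
      rw [abs_le]; exact ⟨by linarith [hu.1], hu.2⟩
    have : (0:ℝ) ≤ 1 - |u| / T := by
      rw [sub_nonneg, div_le_one hT]; exact h1
    exact mul_nonneg this (hF u)
  have hmid : (1 / 2) * (∫ y in (-Y)..Y, F y) ≤ ∫ y in (-Y)..Y, (1 - |y| / T) * F y := by
    rw [← intervalIntegral.integral_const_mul]
    apply intervalIntegral.integral_mono_on (by linarith) (by
      exact (continuous_const.mul hFcont).intervalIntegrable _ _) (hint _ _)
    intro u hu
    have h1 : |u| ≤ Y := abs_le.mpr ⟨hu.1, hu.2⟩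
    have h2 : (1:ℝ)/2 ≤ 1 - |u| / T := by
      rw [le_sub_iff_add_le, ← le_sub_iff_add_le', div_le_iff₀ hT]
      have : |u| ≤ Y := h1
      nlinarith
    exact mul_le_mul_of_nonneg_right h2 (hF u)
  have hstep2 : (∫ y in (-Y)..Y, F y) ≤ 2 * ∫ y in (-T)..T, (1 - |y| / T) * F y := by
    rw [hsplit]; linarith
  -- Step 3 & 4: Fourier comparison
  have hswapT : (∫ y in (-T)..T, (1 - |y| / T) * F y) = ∑ b ∈ B, G T (d b) :=
    tri_sum_int B d hT
  have hcomp : (∑ b ∈ B, G T (d b)) ≤ (n : ℝ) * ∑ b ∈ B, G Z (d b) := by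
    rw [Finset.mul_sum]
    exact Finset.sum_le_sum fun b _ => G_comp hZ n hn1 (d b)
  have hswapZ : (∑ b ∈ B, G Z (d b)) = ∫ y in (-Z)..Z, (1 - |y| / Z) * F y :=
    (tri_sum_int B d hZ).symm
  -- Step 5
  have hstep5 : (∫ y in (-Z)..Z, (1 - |y| / Z) * F y) ≤ ∫ y in (-Z)..Z, F y := by
    have hintZ : IntervalIntegrable (fun y => (1 - |y| / Z) * F y)
        MeasureTheory.volume (-Z) Z :=
      Continuous.intervalIntegrable
        ((continuous_const.sub (continuous_abs.div_const Z)).mul hFcont) _ _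
    apply intervalIntegral.integral_mono_on (by linarith) hintZ (hFint _ _)
    intro u _
    have h2 : 1 - |u| / Z ≤ 1 := by
      have : 0 ≤ |u| / Z := by positivity
      linarith
    exact mul_le_of_le_one_left (hF u) h2
  -- Combine
  have hRnn : 0 ≤ ∫ y in (-Z)..Z, F y :=
    intervalIntegral.integral_nonneg (by linarith) fun u _ => hF u
  have hL : (∫ y in (-Y)..Y, F y) ≤ 2 * ((n : ℝ) * ∫ y in (-Z)..Z, F y) := by
    calc (∫ y in (-Y)..Y, F y) ≤ 2 * ∫ y in (-T)..T, (1 - |y| / T) * F y := hstep2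
      _ = 2 * ∑ b ∈ B, G T (d b) := by rw [hswapT]
      _ ≤ 2 * ((n : ℝ) * ∑ b ∈ B, G Z (d b)) := by linarith
      _ = 2 * ((n : ℝ) * ∫ y in (-Z)..Z, (1 - |y| / Z) * F y) := by rw [hswapZ]
      _ ≤ 2 * ((n : ℝ) * ∫ y in (-Z)..Z, F y) := by
          have hn0 : (0:ℝ) ≤ n := by positivity
          nlinarith
  have hfrac : 2 * (n : ℝ) / Y ≤ 8 / Z := by
    rw [div_le_div_iff₀ hY hZ]
    have : (n : ℝ) * Z ≤ 4 * Y := by rw [← hTdef]; exact hT4Y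
    nlinarith
  calc (1 / Y) * ∫ y in (-Y)..Y, F y
      ≤ (1 / Y) * (2 * ((n : ℝ) * ∫ y in (-Z)..Z, F y)) := by
        apply mul_le_mul_of_nonneg_left hL (by positivity)
    _ = (2 * (n : ℝ) / Y) * ∫ y in (-Z)..Z, F y := by ring
    _ ≤ (8 / Z) * ∫ y in (-Z)..Z, F y := mul_le_mul_of_nonneg_right hfrac hRnn
    _ = 8 * ((1 / Z) * ∫ y in (-Z)..Z, F y) := by ring

theorem mean_value_shorter_range :
    ∃ C : ℝ, 0 < C ∧
      ∀ (a₁ b₁ a₂ b₂ : ℤ) (φ : ℤ → ℤ → ℝ) (Y Z : ℝ), 0 < Z → 0 < Y → Z ≤ Y →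
        (1 / Y) * (∫ y in (-Y)..Y,
            ‖∑ n ∈ Finset.Icc a₁ b₁, ∑ u ∈ Finset.Icc a₂ b₂,
              e (y * φ n u)‖ ^ 2)
        ≤ C * ((1 / Z) * ∫ y in (-Z)..Z,
            ‖∑ n ∈ Finset.Icc a₁ b₁, ∑ u ∈ Finset.Icc a₂ b₂,
              e (y * φ n u)‖ ^ 2) := by
  refine ⟨8, by norm_num, fun a₁ b₁ a₂ b₂ φ Y Z hZ hY hZY => ?_⟩
  have hrw : ∀ y : ℝ,
      ‖∑ n ∈ Finset.Icc a₁ b₁, ∑ u ∈ Finset.Icc a₂ b₂, e (y * φ n u)‖ ^ 2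
        = ∑ r ∈ (Finset.Icc a₁ b₁ ×ˢ Finset.Icc a₂ b₂) ×ˢ
            (Finset.Icc a₁ b₁ ×ˢ Finset.Icc a₂ b₂),
            Real.cos (2 * Real.pi * (y * ((fun p : ℤ × ℤ => φ p.1 p.2) r.1
              - (fun p : ℤ × ℤ => φ p.1 p.2) r.2))) := by
    intro y
    rw [← abs_sq_eq_cos_sum (Finset.Icc a₁ b₁ ×ˢ Finset.Icc a₂ b₂)
      (fun p : ℤ × ℤ => φ p.1 p.2) y]
    congr 1
    rw [Finset.sum_product]
  simp only [hrw]
  apply key_ineq _ _ hZ hY hZY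
  intro y
  rw [← hrw y]
  positivity
end

section
/- There is an absolute constant C such that the following holds. Let I₁ and I₂ be finite intervals, let φ : I₁ × I₂ → ℝ, let Y > 0 be a real number, and let θ(n,u) be complex numbers with |θ(n,u)| ≤ 1 for all integers n ∈ I₁, u ∈ I₂. Then ∫_{−Y}^{Y} | Σ_{n ∈ I₁} Σ_{u ∈ I₂} θ(n,u) e(y φ(n,u)) |² dy ≤ C ∫_{−Y}^{Y} | Σ_{n ∈ I₁} Σ_{u ∈ I₂} e(y φ(n,u)) |² dy. -/
set_option maxHeartbeats 800000

open Finset Complex intervalIntegral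

lemma continuous_e : Continuous e := by
  unfold e; fun_prop

lemma e_add (x y : ℝ) : e (x + y) = e x * e y := by
  unfold e
  rw [← Complex.exp_add]
  push_cast
  ring_nf

lemma conj_e (x : ℝ) : (starRingEnd ℂ) (e x) = e (-x) := by
  unfold e
  rw [← Complex.exp_conj]
  push_cast
  simp [map_mul, Complex.conj_I, Complex.conj_ofReal, map_ofNat]

noncomputable def If (Y Δ : ℝ) : ℝ :=
  if Δ = 0 then 2 * Y else Real.sin (2 * Real.pi * Y * Δ) / (Real.pi * Δ)

lemma integral_e_eq (Y Δ : ℝ) : ∫ y in (-Y)..Y, e (y * Δ) = (If Y Δ : ℂ) := by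
  rcases eq_or_ne Δ 0 with h | h
  · simp [h, e, If]
    ring
  · have hc : (2 * Real.pi * Complex.I * Δ : ℂ) ≠ 0 := by
      simp [Real.pi_ne_zero, Complex.I_ne_zero, h]
    have heq : ∀ y : ℝ, e (y * Δ) = Complex.exp ((2 * Real.pi * Complex.I * Δ) * y) := by
      intro y; unfold e; push_cast; ring_nf
    simp only [heq]
    rw [integral_exp_mul_complex hc]
    rw [If, if_neg h]
    have e1 : (2 * Real.pi * Complex.I * (Δ:ℂ)) * (Y:ℝ) = ((2*Real.pi*Y*Δ : ℝ) : ℂ) * Complex.I := by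
      push_cast; ring
    have e2 : (2 * Real.pi * Complex.I * (Δ:ℂ)) * ((-Y:ℝ):ℂ) = ((-(2*Real.pi*Y*Δ) : ℝ) : ℂ) * Complex.I := by
      push_cast; ring
    rw [e1, e2, Complex.exp_mul_I, Complex.exp_mul_I]
    simp only [Complex.ofReal_neg, Complex.cos_neg, Complex.sin_neg, ← Complex.ofReal_sin]
    have hπΔ : ((Real.pi * Δ : ℝ) : ℂ) ≠ 0 := by
      simp [Real.pi_ne_zero, h]
    have hpi : (Real.pi : ℂ) ≠ 0 := by exact_mod_cast Real.pi_ne_zero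
    have hD : (Δ : ℂ) ≠ 0 := by exact_mod_cast h
    push_cast
    field_simp
    ring

lemma If_sq_le (Y Δ : ℝ) : (If Y Δ) ^ 2 ≤ 4 * (If (Y/2) Δ) ^ 2 := by
  rcases eq_or_ne Δ 0 with h | h
  · simp [If, h]; nlinarith [sq_nonneg Y]
  · simp only [If, if_neg h]
    have h2 : 2 * Real.pi * (Y/2) * Δ = Real.pi * Y * Δ := by ring
    have h1 : 2 * Real.pi * Y * Δ = 2 * (Real.pi * Y * Δ) := by ring
    rw [h2, h1, Real.sin_two_mul, div_pow, div_pow]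
    rw [div_le_iff₀ (by positivity : (0:ℝ) < (Real.pi * Δ)^2)]
    have := Real.sin_sq_add_cos_sq (Real.pi * Y * Δ)
    have hs := Real.sin_sq_le_one (Real.pi * Y * Δ)
    have hc := Real.cos_sq_le_one (Real.pi * Y * Δ)
    have hne : (Real.pi * Δ)^2 ≠ 0 := by positivity
    field_simp
    nlinarith [sq_nonneg (Real.sin (Real.pi * Y * Δ)), sq_nonneg (Real.cos (Real.pi * Y * Δ))]

section Expand

variable {ι : Type*}

lemma intInt (c : ℂ) (Δ a b : ℝ) :
    IntervalIntegrable (fun y => c * e (y * Δ)) MeasureTheory.volume a b := by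
  apply Continuous.intervalIntegrable
  exact continuous_const.mul (continuous_e.comp (continuous_id.mul continuous_const))

lemma intIntSum (J : Finset ι) (k : ι → ℂ) (Δ : ι → ℝ) (a b : ℝ) :
    IntervalIntegrable (fun y => ∑ q ∈ J, k q * e (y * Δ q)) MeasureTheory.volume a b := by
  apply Continuous.intervalIntegrable
  exact continuous_finset_sum _ fun q _ =>
    continuous_const.mul (continuous_e.comp (continuous_id.mul continuous_const))

lemma expand1 (J : Finset ι) (ψ : ι → ℝ) (c : ι → ℂ) (Y : ℝ) :
    ∫ y in (-Y)..Y, (∑ p ∈ J, c p * e (y * ψ p)) *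
        (starRingEnd ℂ) (∑ q ∈ J, c q * e (y * ψ q))
    = ∑ p ∈ J, ∑ q ∈ J, c p * (starRingEnd ℂ) (c q) * (If Y (ψ p - ψ q) : ℂ) := by
  have key : ∀ y : ℝ, (∑ p ∈ J, c p * e (y * ψ p)) *
        (starRingEnd ℂ) (∑ q ∈ J, c q * e (y * ψ q))
      = ∑ p ∈ J, ∑ q ∈ J, (c p * (starRingEnd ℂ) (c q)) * e (y * (ψ p - ψ q)) := by
    intro y
    rw [map_sum, Finset.sum_mul_sum]
    refine Finset.sum_congr rfl fun p _ => Finset.sum_congr rfl fun q _ => ?_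
    rw [map_mul, conj_e]
    have : y * (ψ p - ψ q) = y * ψ p + -(y * ψ q) := by ring
    rw [this, e_add]
    ring
  simp only [key]
  rw [intervalIntegral.integral_finset_sum (fun p _ => ?_)]
  · refine Finset.sum_congr rfl fun p _ => ?_
    rw [intervalIntegral.integral_finset_sum (fun q _ => intInt _ _ _ _)]
    refine Finset.sum_congr rfl fun q _ => ?_
    rw [intervalIntegral.integral_const_mul, integral_e_eq]
  · exact intIntSum J (fun q => c p * (starRingEnd ℂ) (c q)) (fun q => ψ p - ψ q) (-Y) Y

lemma expand2 (J : Finset ι) (ψ : ι → ℝ) (c : ι → ℂ) (Y : ℝ) :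
    (∫ s in (-Y)..Y, ∫ t in (-Y)..Y,
      (∑ p ∈ J, c p * e ((s+t) * ψ p)) * (starRingEnd ℂ) (∑ q ∈ J, c q * e ((s+t) * ψ q)))
    = ∑ p ∈ J, ∑ q ∈ J, c p * (starRingEnd ℂ) (c q) * (If Y (ψ p - ψ q) : ℂ)^2 := by
  have hinner : ∀ s : ℝ, (∫ t in (-Y)..Y,
      (∑ p ∈ J, c p * e ((s+t) * ψ p)) * (starRingEnd ℂ) (∑ q ∈ J, c q * e ((s+t) * ψ q)))
      = ∑ p ∈ J, ∑ q ∈ J,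
          (c p * (starRingEnd ℂ) (c q) * (If Y (ψ p - ψ q) : ℂ)) * e (s * (ψ p - ψ q)) := by
    intro s
    have h1 : ∀ (t : ℝ) (p : ι), c p * e ((s+t) * ψ p) = (c p * e (s * ψ p)) * e (t * ψ p) := by
      intro t p
      rw [show (s+t) * ψ p = s * ψ p + t * ψ p by ring, e_add]; ring
    simp only [h1]
    rw [expand1 J ψ (fun p => c p * e (s * ψ p)) Y]
    refine Finset.sum_congr rfl fun p _ => Finset.sum_congr rfl fun q _ => ?_
    rw [map_mul, conj_e]
    rw [show s * (ψ p - ψ q) = s * ψ p + -(s * ψ q) by ring, e_add]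
    ring
  simp only [hinner]
  rw [intervalIntegral.integral_finset_sum (fun p _ =>
    intIntSum J (fun q => c p * (starRingEnd ℂ) (c q) * (If Y (ψ p - ψ q) : ℂ))
      (fun q => ψ p - ψ q) (-Y) Y)]
  refine Finset.sum_congr rfl fun p _ => ?_
  rw [intervalIntegral.integral_finset_sum (fun q _ => intInt _ _ _ _)]
  refine Finset.sum_congr rfl fun q _ => ?_
  rw [intervalIntegral.integral_const_mul, integral_e_eq]
  ring

lemma expand2_real (J : Finset ι) (ψ : ι → ℝ) (c : ι → ℂ) (Y : ℝ) :
    (∫ s in (-Y)..Y, ∫ t in (-Y)..Y,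
        Complex.normSq (∑ p ∈ J, c p * e ((s+t) * ψ p)))
    = (∑ p ∈ J, ∑ q ∈ J, c p * (starRingEnd ℂ) (c q) * (If Y (ψ p - ψ q) : ℂ)^2).re := by
  rw [← expand2 J ψ c Y]
  have h1 : ∀ s : ℝ, ((∫ t in (-Y)..Y,
        Complex.normSq (∑ p ∈ J, c p * e ((s+t) * ψ p)) : ℝ) : ℂ)
      = ∫ t in (-Y)..Y,
      (∑ p ∈ J, c p * e ((s+t) * ψ p)) * (starRingEnd ℂ) (∑ q ∈ J, c q * e ((s+t) * ψ q)) := by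
    intro s
    rw [← intervalIntegral.integral_ofReal]
    refine intervalIntegral.integral_congr fun t _ => ?_
    rw [Complex.mul_conj]
  have h2 : ((∫ s in (-Y)..Y, ∫ t in (-Y)..Y,
        Complex.normSq (∑ p ∈ J, c p * e ((s+t) * ψ p)) : ℝ) : ℂ)
      = ∫ s in (-Y)..Y, ∫ t in (-Y)..Y,
      (∑ p ∈ J, c p * e ((s+t) * ψ p)) * (starRingEnd ℂ) (∑ q ∈ J, c q * e ((s+t) * ψ q)) := by
    rw [← intervalIntegral.integral_ofReal]
    exact intervalIntegral.integral_congr fun s _ => h1 s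
  rw [← h2, Complex.ofReal_re]

end Expand

section Claims

lemma cont_inner (f : ℝ → ℝ) (hf : Continuous f) (a : ℝ) :
    Continuous fun s => ∫ t in (-a)..a, f (s + t) := by
  have hF : Continuous fun x => ∫ u in (0:ℝ)..x, f u :=
    intervalIntegral.continuous_primitive (fun _ _ => hf.intervalIntegrable _ _) 0
  have heq : (fun s => ∫ t in (-a)..a, f (s + t))
      = fun s => (∫ u in (0:ℝ)..(s + a), f u) - ∫ u in (0:ℝ)..(s + -a), f u := by
    funext s
    rw [intervalIntegral.integral_comp_add_left,
      intervalIntegral.integral_interval_sub_left (hf.intervalIntegrable _ _)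
        (hf.intervalIntegrable _ _)]
  rw [heq]
  exact (hF.comp (continuous_id.add continuous_const)).sub
    (hF.comp (continuous_id.add continuous_const))

lemma claimA (f : ℝ → ℝ) (hf : Continuous f) (h0 : ∀ x, 0 ≤ f x) (Y : ℝ) (hY : 0 < Y) :
    Y * ∫ y in (-Y)..Y, f y ≤ ∫ s in (-Y)..Y, ∫ t in (-Y)..Y, f (s + t) := by
  have hint : ∀ a b : ℝ, IntervalIntegrable f MeasureTheory.volume a b :=
    fun a b => hf.intervalIntegrable _ _
  have hae : ∀ a b : ℝ, 0 ≤ᵐ[MeasureTheory.volume.restrict (Set.Ioc a b)] f :=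
    fun a b => Filter.Eventually.of_forall h0
  have hGint : ∀ a b : ℝ, IntervalIntegrable (fun s => ∫ t in (-Y)..Y, f (s + t))
      MeasureTheory.volume a b := fun a b => (cont_inner f hf Y).intervalIntegrable _ _
  have hsplit : (∫ s in (-Y)..(0:ℝ), ∫ t in (-Y)..Y, f (s + t))
      + (∫ s in (0:ℝ)..Y, ∫ t in (-Y)..Y, f (s + t))
      = ∫ s in (-Y)..Y, ∫ t in (-Y)..Y, f (s + t) :=
    intervalIntegral.integral_add_adjacent_intervals (hGint _ _) (hGint _ _)
  have h₁ : Y * (∫ u in (-Y)..(0:ℝ), f u) ≤ ∫ s in (-Y)..(0:ℝ), ∫ t in (-Y)..Y, f (s + t) := by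
    have := intervalIntegral.integral_mono_on (by linarith : (-Y) ≤ (0:ℝ))
      (_root_.intervalIntegrable_const (c := ∫ u in (-Y)..(0:ℝ), f u)) (hGint _ _)
      (fun s hs => ?_)
    · simpa [sub_neg_eq_add] using this
    · rw [intervalIntegral.integral_comp_add_left]
      exact intervalIntegral.integral_mono_interval (by linarith [hs.1, hs.2])
        (by linarith) (by linarith [hs.1, hs.2]) (hae _ _) (hint _ _)
  have h₂ : Y * (∫ u in (0:ℝ)..Y, f u) ≤ ∫ s in (0:ℝ)..Y, ∫ t in (-Y)..Y, f (s + t) := by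
    have := intervalIntegral.integral_mono_on (by linarith : (0:ℝ) ≤ Y)
      (_root_.intervalIntegrable_const (c := ∫ u in (0:ℝ)..Y, f u)) (hGint _ _)
      (fun s hs => ?_)
    · simpa using this
    · rw [intervalIntegral.integral_comp_add_left]
      exact intervalIntegral.integral_mono_interval (by linarith [hs.1, hs.2])
        (by linarith) (by linarith [hs.1, hs.2]) (hae _ _) (hint _ _)
  have hsum : (∫ u in (-Y)..(0:ℝ), f u) + (∫ u in (0:ℝ)..Y, f u) = ∫ u in (-Y)..Y, f u :=
    intervalIntegral.integral_add_adjacent_intervals (hint _ _) (hint _ _)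
  calc Y * ∫ y in (-Y)..Y, f y
      = Y * (∫ u in (-Y)..(0:ℝ), f u) + Y * (∫ u in (0:ℝ)..Y, f u) := by
        rw [← hsum]; ring
    _ ≤ (∫ s in (-Y)..(0:ℝ), ∫ t in (-Y)..Y, f (s + t))
        + (∫ s in (0:ℝ)..Y, ∫ t in (-Y)..Y, f (s + t)) := add_le_add h₁ h₂
    _ = _ := hsplit

lemma claimB (f : ℝ → ℝ) (hf : Continuous f) (h0 : ∀ x, 0 ≤ f x) (Y : ℝ) (hY : 0 < Y) :
    (∫ s in (-(Y/2))..(Y/2), ∫ t in (-(Y/2))..(Y/2), f (s + t)) ≤ Y * ∫ y in (-Y)..Y, f y := by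
  have hint : ∀ a b : ℝ, IntervalIntegrable f MeasureTheory.volume a b :=
    fun a b => hf.intervalIntegrable _ _
  have hae : ∀ a b : ℝ, 0 ≤ᵐ[MeasureTheory.volume.restrict (Set.Ioc a b)] f :=
    fun a b => Filter.Eventually.of_forall h0
  have := intervalIntegral.integral_mono_on (by linarith : -(Y/2) ≤ (Y/2))
    ((cont_inner f hf (Y/2)).intervalIntegrable _ _)
    (_root_.intervalIntegrable_const (μ := MeasureTheory.volume) (c := ∫ y in (-Y)..Y, f y))
    (fun s hs => ?_)
  · calc (∫ s in (-(Y/2))..(Y/2), ∫ t in (-(Y/2))..(Y/2), f (s + t))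
        ≤ ∫ s in (-(Y/2))..(Y/2), (∫ y in (-Y)..Y, f y) := this
      _ = Y * ∫ y in (-Y)..Y, f y := by
        rw [intervalIntegral.integral_const]; rw [smul_eq_mul]; ring_nf
  · rw [intervalIntegral.integral_comp_add_left]
    exact intervalIntegral.integral_mono_interval (by linarith [hs.1, hs.2])
      (by linarith) (by linarith [hs.1, hs.2]) (hae _ _) (hint _ _)

end Claims

lemma re_term (z w : ℂ) (hz : ‖z‖ ≤ 1) (hw : ‖w‖ ≤ 1) (r : ℝ) :
    (z * (starRingEnd ℂ) w * (r:ℂ)^2).re ≤ r^2 := by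
  have h1 : (z * (starRingEnd ℂ) w * (r:ℂ)^2) = (z * (starRingEnd ℂ) w) * ((r^2:ℝ):ℂ) := by
    push_cast; ring
  rw [h1, Complex.mul_re, Complex.ofReal_re, Complex.ofReal_im]
  have h2 : (z * (starRingEnd ℂ) w).re ≤ 1 := by
    calc (z * (starRingEnd ℂ) w).re ≤ ‖z * (starRingEnd ℂ) w‖ := Complex.re_le_norm _
      _ = ‖z‖ * ‖w‖ := by rw [norm_mul, Complex.norm_conj]
      _ ≤ 1 := by nlinarith [norm_nonneg z, norm_nonneg w]
  nlinarith [sq_nonneg r]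

theorem mean_value_remove_coefficients :
    ∃ C : ℝ, 0 < C ∧
      ∀ (a₁ b₁ a₂ b₂ : ℤ) (φ : ℤ → ℤ → ℝ) (Y : ℝ), 0 < Y →
        ∀ θ : ℤ → ℤ → ℂ,
          (∀ n ∈ Finset.Icc a₁ b₁, ∀ u ∈ Finset.Icc a₂ b₂, ‖θ n u‖ ≤ 1) →
          (∫ y in (-Y)..Y,
              ‖∑ n ∈ Finset.Icc a₁ b₁, ∑ u ∈ Finset.Icc a₂ b₂,
                θ n u * e (y * φ n u)‖ ^ 2)
          ≤ C * ∫ y in (-Y)..Y,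
              ‖∑ n ∈ Finset.Icc a₁ b₁, ∑ u ∈ Finset.Icc a₂ b₂,
                e (y * φ n u)‖ ^ 2 := by
  refine ⟨4, by norm_num, ?_⟩
  intro a₁ b₁ a₂ b₂ φ Y hY θ hθ
  set J : Finset (ℤ × ℤ) := Finset.Icc a₁ b₁ ×ˢ Finset.Icc a₂ b₂ with hJ
  set ψ : ℤ × ℤ → ℝ := fun p => φ p.1 p.2 with hψ
  set c : ℤ × ℤ → ℂ := fun p => θ p.1 p.2 with hc
  have hcb : ∀ p ∈ J, ‖c p‖ ≤ 1 := by
    intro p hp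
    rw [hJ, Finset.mem_product] at hp
    exact hθ p.1 hp.1 p.2 hp.2
  set fS : ℝ → ℝ := fun y => Complex.normSq (∑ p ∈ J, c p * e (y * ψ p)) with hfS
  set fT : ℝ → ℝ := fun y => Complex.normSq (∑ p ∈ J, (1:ℂ) * e (y * ψ p)) with hfT
  have hScont : Continuous fun y : ℝ => ∑ p ∈ J, c p * e (y * ψ p) :=
    continuous_finset_sum _ fun p _ =>
      continuous_const.mul (continuous_e.comp (continuous_id.mul continuous_const))
  have hTcont : Continuous fun y : ℝ => ∑ p ∈ J, (1:ℂ) * e (y * ψ p) :=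
    continuous_finset_sum _ fun p _ =>
      continuous_const.mul (continuous_e.comp (continuous_id.mul continuous_const))
  have hfScont : Continuous fS := Complex.continuous_normSq.comp hScont
  have hfTcont : Continuous fT := Complex.continuous_normSq.comp hTcont
  have hfS0 : ∀ x, 0 ≤ fS x := fun x => Complex.normSq_nonneg _
  have hfT0 : ∀ x, 0 ≤ fT x := fun x => Complex.normSq_nonneg _
  -- rewrite goal
  have hgoalL : (∫ y in (-Y)..Y,
      ‖∑ n ∈ Finset.Icc a₁ b₁, ∑ u ∈ Finset.Icc a₂ b₂,
        θ n u * e (y * φ n u)‖ ^ 2) = ∫ y in (-Y)..Y, fS y := by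
    refine intervalIntegral.integral_congr fun y _ => ?_
    simp only [hfS, Complex.sq_norm, hJ, Finset.sum_product, hc, hψ]
  have hgoalR : (∫ y in (-Y)..Y,
      ‖∑ n ∈ Finset.Icc a₁ b₁, ∑ u ∈ Finset.Icc a₂ b₂,
        e (y * φ n u)‖ ^ 2) = ∫ y in (-Y)..Y, fT y := by
    refine intervalIntegral.integral_congr fun y _ => ?_
    simp only [hfT, Complex.sq_norm, hJ, Finset.sum_product, hψ, one_mul]
  rw [hgoalL, hgoalR]
  -- main chain
  have step1 : Y * ∫ y in (-Y)..Y, fS y ≤ ∫ s in (-Y)..Y, ∫ t in (-Y)..Y, fS (s + t) :=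
    claimA fS hfScont hfS0 Y hY
  have step2 : (∫ s in (-Y)..Y, ∫ t in (-Y)..Y, fS (s + t))
      = (∑ p ∈ J, ∑ q ∈ J, c p * (starRingEnd ℂ) (c q) * (If Y (ψ p - ψ q) : ℂ)^2).re :=
    expand2_real J ψ c Y
  have step3 : (∑ p ∈ J, ∑ q ∈ J, c p * (starRingEnd ℂ) (c q) * (If Y (ψ p - ψ q) : ℂ)^2).re
      ≤ ∑ p ∈ J, ∑ q ∈ J, (If Y (ψ p - ψ q))^2 := by
    rw [Complex.re_sum]
    refine Finset.sum_le_sum fun p hp => ?_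
    rw [Complex.re_sum]
    refine Finset.sum_le_sum fun q hq => ?_
    have : ((If Y (ψ p - ψ q) : ℂ))^2 = (((If Y (ψ p - ψ q)) : ℝ) : ℂ)^2 := rfl
    exact re_term (c p) (c q) (hcb p hp) (hcb q hq) (If Y (ψ p - ψ q))
  have step4 : (∑ p ∈ J, ∑ q ∈ J, (If Y (ψ p - ψ q))^2)
      ≤ 4 * ∑ p ∈ J, ∑ q ∈ J, (If (Y/2) (ψ p - ψ q))^2 := by
    rw [Finset.mul_sum]
    refine Finset.sum_le_sum fun p _ => ?_
    rw [Finset.mul_sum]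
    exact Finset.sum_le_sum fun q _ => If_sq_le Y (ψ p - ψ q)
  have step5 : (∑ p ∈ J, ∑ q ∈ J, (If (Y/2) (ψ p - ψ q))^2)
      = ∫ s in (-(Y/2))..(Y/2), ∫ t in (-(Y/2))..(Y/2), fT (s + t) := by
    rw [expand2_real J ψ (fun _ => (1:ℂ)) (Y/2)]
    rw [Complex.re_sum]
    refine Finset.sum_congr rfl fun p _ => ?_
    rw [Complex.re_sum]
    refine Finset.sum_congr rfl fun q _ => ?_
    simp only [one_mul, map_one, mul_one, ← Complex.ofReal_pow, Complex.ofReal_re]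
  have step6 : (∫ s in (-(Y/2))..(Y/2), ∫ t in (-(Y/2))..(Y/2), fT (s + t))
      ≤ Y * ∫ y in (-Y)..Y, fT y := claimB fT hfTcont hfT0 Y hY
  have : Y * ∫ y in (-Y)..Y, fS y ≤ Y * (4 * ∫ y in (-Y)..Y, fT y) := by
    calc Y * ∫ y in (-Y)..Y, fS y
        ≤ ∫ s in (-Y)..Y, ∫ t in (-Y)..Y, fS (s + t) := step1
      _ = _ := step2
      _ ≤ ∑ p ∈ J, ∑ q ∈ J, (If Y (ψ p - ψ q))^2 := step3
      _ ≤ 4 * ∑ p ∈ J, ∑ q ∈ J, (If (Y/2) (ψ p - ψ q))^2 := step4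
      _ = 4 * ∫ s in (-(Y/2))..(Y/2), ∫ t in (-(Y/2))..(Y/2), fT (s + t) := by rw [step5]
      _ ≤ 4 * (Y * ∫ y in (-Y)..Y, fT y) := by linarith [step6]
      _ = Y * (4 * ∫ y in (-Y)..Y, fT y) := by ring
  exact le_of_mul_le_mul_left (by linarith) hY
end

section
/- There is a constant C, which may depend on k, such that the following holds. For positive integers U₁, N₁, U₂, N₂, k and a positive real number Y, let J_k(U₁, N₁, U₂, N₂, Y) denote the number of quadruples of integers (u₁, n₁, u₂, n₂) with U₁ ≤ u₁ < 2U₁, N₁ ≤ n₁ < 2N₁, U₂ ≤ u₂ < 2U₂, N₂ ≤ n₂ < 2N₂ and |u₁/n₁^k − u₂/n₂^k| ≤ 1/Y, and write J_k(U, N, Y) = J_k(U, N, U, N, Y). Then J_k(U₁, N₁, U₂, N₂, Y) ≤ C · J_k(U₁, N₁, Y)^{1/2} · J_k(U₂, N₂, Y)^{1/2}. -/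
open Finset

/-- `Jk k U₁ N₁ U₂ N₂ Y` counts quadruples `(u₁, n₁, u₂, n₂)` of integers with
`U₁ ≤ u₁ < 2U₁`, `N₁ ≤ n₁ < 2N₁`, `U₂ ≤ u₂ < 2U₂`, `N₂ ≤ n₂ < 2N₂` and
`|u₁/n₁^k − u₂/n₂^k| ≤ 1/Y`. -/
noncomputable def Jk (k U₁ N₁ U₂ N₂ : ℕ) (Y : ℝ) : ℕ :=
  (((Finset.Ico U₁ (2 * U₁) ×ˢ Finset.Ico N₁ (2 * N₁)) ×ˢ
      (Finset.Ico U₂ (2 * U₂) ×ˢ Finset.Ico N₂ (2 * N₂))).filter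
    (fun q : (ℕ × ℕ) × (ℕ × ℕ) =>
      |(q.1.1 : ℝ) / (q.1.2 : ℝ) ^ k - (q.2.1 : ℝ) / (q.2.2 : ℝ) ^ k| ≤ 1 / Y)).card

section Aux

set_option linter.unusedSectionVars false

variable {α : Type*} [DecidableEq α]

lemma fiber_card (A B : Finset α) (g : α → ℤ) (d : ℤ) :
    (((A ×ˢ B).filter (fun x : α × α => g x.2 = g x.1 + d)).card : ℝ) =
      ∑ m ∈ A.image g, ((A.filter (fun p => g p = m)).card : ℝ) *
        ((B.filter (fun p => g p = m + d)).card : ℝ) := by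
  have h := Finset.card_eq_sum_card_fiberwise
    (f := fun x : α × α => g x.1) (s := (A ×ˢ B).filter (fun x => g x.2 = g x.1 + d))
    (t := A.image g) ?_
  · rw [h]
    push_cast
    refine Finset.sum_congr rfl fun m _ => ?_
    have : ((A ×ˢ B).filter (fun x : α × α => g x.2 = g x.1 + d)).filter
        (fun x => g x.1 = m) =
        (A.filter (fun p => g p = m)) ×ˢ (B.filter (fun p => g p = m + d)) := by
      ext x
      simp only [Finset.filter_filter, Finset.mem_filter, Finset.mem_product]
      constructor
      · rintro ⟨⟨h1, h2⟩, h3, h4⟩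
        exact ⟨⟨h1, h4⟩, h2, by omega⟩
      · rintro ⟨⟨h1, h4⟩, h2, h3⟩
        exact ⟨⟨h1, h2⟩, by omega, h4⟩
    rw [this, Finset.card_product]
    push_cast
    ring
  · intro x hx
    simp only [Finset.mem_coe, Finset.mem_filter, Finset.mem_product] at hx
    exact Finset.mem_image_of_mem g hx.1.1

lemma self_card (A : Finset α) (g : α → ℤ) :
    (((A ×ˢ A).filter (fun x : α × α => g x.2 = g x.1)).card : ℝ) =
      ∑ m ∈ A.image g, ((A.filter (fun p => g p = m)).card : ℝ) ^ 2 := by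
  have h0 : ((A ×ˢ A).filter (fun x : α × α => g x.2 = g x.1)) =
      ((A ×ˢ A).filter (fun x : α × α => g x.2 = g x.1 + 0)) :=
    Finset.filter_congr (fun x _ => by simp)
  rw [h0, fiber_card A A g 0]
  refine Finset.sum_congr rfl fun m _ => ?_
  rw [add_zero, sq]

lemma shift_le (A B : Finset α) (g : α → ℤ) (d : ℤ) :
    (((A ×ˢ B).filter (fun x : α × α => g x.2 = g x.1 + d)).card : ℝ) ≤
      Real.sqrt (((A ×ˢ A).filter (fun x : α × α => g x.2 = g x.1)).card) *
      Real.sqrt (((B ×ˢ B).filter (fun x : α × α => g x.2 = g x.1)).card) := by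
  set a : ℤ → ℝ := fun m => ((A.filter (fun p => g p = m)).card : ℝ) with ha
  set b : ℤ → ℝ := fun m => ((B.filter (fun p => g p = m)).card : ℝ) with hb
  have hAA := self_card A g
  have hBB := self_card B g
  have hb_aux : ∑ m ∈ A.image g, b (m + d) ^ 2 ≤ ∑ m ∈ B.image g, b m ^ 2 := by
    have h1 : ∑ m' ∈ (A.image g).image (· + d), b m' ^ 2 =
        ∑ m ∈ A.image g, b (m + d) ^ 2 :=
      Finset.sum_image (s := A.image g) (g := (· + d)) (f := fun m' => b m' ^ 2)
        (fun x _ y _ h => add_left_injective d h)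
    rw [← h1]
    have h2 : ∑ m' ∈ (A.image g).image (· + d), b m' ^ 2 =
        ∑ m' ∈ ((A.image g).image (· + d)).filter (fun m' => m' ∈ B.image g), b m' ^ 2 := by
      rw [Finset.sum_filter_of_ne]
      intro m' _ hne
      by_contra hmem
      apply hne
      have he : (B.filter (fun p => g p = m')) = ∅ := by
        rw [Finset.filter_eq_empty_iff]
        intro p hp hgp
        exact hmem (Finset.mem_image.mpr ⟨p, hp, hgp⟩)
      simp [hb, he]
    rw [h2]
    exact Finset.sum_le_sum_of_subset_of_nonneg
      (fun m' hm' => (Finset.mem_filter.mp hm').2) (fun m _ _ => sq_nonneg _)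
  have key : (((A ×ˢ B).filter (fun x : α × α => g x.2 = g x.1 + d)).card : ℝ) ^ 2 ≤
      (((A ×ˢ A).filter (fun x : α × α => g x.2 = g x.1)).card : ℝ) *
      (((B ×ˢ B).filter (fun x : α × α => g x.2 = g x.1)).card : ℝ) := by
    rw [fiber_card A B g d, hAA, hBB]
    calc (∑ m ∈ A.image g, a m * b (m + d)) ^ 2
        ≤ (∑ m ∈ A.image g, a m ^ 2) * ∑ m ∈ A.image g, b (m + d) ^ 2 :=
          Finset.sum_mul_sq_le_sq_mul_sq _ _ _
      _ ≤ (∑ m ∈ A.image g, a m ^ 2) * ∑ m ∈ B.image g, b m ^ 2 :=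
          mul_le_mul_of_nonneg_left hb_aux (Finset.sum_nonneg fun m _ => sq_nonneg _)
  calc (((A ×ˢ B).filter (fun x : α × α => g x.2 = g x.1 + d)).card : ℝ)
      = Real.sqrt ((((A ×ˢ B).filter (fun x : α × α => g x.2 = g x.1 + d)).card : ℝ) ^ 2) := by
        rw [Real.sqrt_sq (by positivity)]
    _ ≤ Real.sqrt ((((A ×ˢ A).filter (fun x : α × α => g x.2 = g x.1)).card : ℝ) *
          (((B ×ˢ B).filter (fun x : α × α => g x.2 = g x.1)).card : ℝ)) :=
        Real.sqrt_le_sqrt key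
    _ = _ := Real.sqrt_mul (by positivity) _

end Aux

theorem Jk_cauchy_schwarz (k : ℕ) (hk : 0 < k) :
    ∃ C : ℝ, 0 < C ∧
      ∀ U₁ N₁ U₂ N₂ : ℕ, 0 < U₁ → 0 < N₁ → 0 < U₂ → 0 < N₂ → ∀ Y : ℝ, 0 < Y →
        (Jk k U₁ N₁ U₂ N₂ Y : ℝ)
          ≤ C * Real.sqrt (Jk k U₁ N₁ U₁ N₁ Y) * Real.sqrt (Jk k U₂ N₂ U₂ N₂ Y) := by
  refine ⟨3, by norm_num, fun U₁ N₁ U₂ N₂ hU₁ hN₁ hU₂ hN₂ Y hY => ?_⟩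
  classical
  set f : ℕ × ℕ → ℝ := fun p => (p.1 : ℝ) / (p.2 : ℝ) ^ k with hf
  set g : ℕ × ℕ → ℤ := fun p => ⌊Y * f p⌋ with hg
  set R₁ : Finset (ℕ × ℕ) := Finset.Ico U₁ (2 * U₁) ×ˢ Finset.Ico N₁ (2 * N₁) with hR₁
  set R₂ : Finset (ℕ × ℕ) := Finset.Ico U₂ (2 * U₂) ×ˢ Finset.Ico N₂ (2 * N₂) with hR₂
  have e1 : Y * (1 / Y) = 1 := by field_simp
  -- equal floors imply close
  have floor_close : ∀ p q : ℕ × ℕ, g p = g q → |f p - f q| ≤ 1 / Y := by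
    intro p q h
    have h1 : Y * f p - Y * f q < 1 := by
      have h' : ⌊Y * f p⌋ = ⌊Y * f q⌋ := h
      have h3 := Int.lt_floor_add_one (Y * f p)
      have h2 := Int.floor_le (Y * f q)
      rw [h'] at h3
      push_cast at h3 h2 ⊢
      linarith
    have h1' : Y * f q - Y * f p < 1 := by
      have h' : ⌊Y * f p⌋ = ⌊Y * f q⌋ := h
      have h3 := Int.lt_floor_add_one (Y * f q)
      have h2 := Int.floor_le (Y * f p)
      rw [← h'] at h3
      push_cast at h3 h2 ⊢
      linarith
    have habs : |f p - f q| * Y ≤ 1 := by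
      rcases abs_cases (f p - f q) with ⟨he, _⟩ | ⟨he, _⟩ <;> rw [he] <;> nlinarith
    calc |f p - f q| = |f p - f q| * Y / Y := by field_simp
      _ ≤ 1 / Y := by gcongr
  -- close implies floors differ by at most 1
  have floor_near : ∀ p q : ℕ × ℕ, |f p - f q| ≤ 1 / Y →
      g q = g p - 1 ∨ g q = g p ∨ g q = g p + 1 := by
    intro p q h
    rw [abs_le] at h
    have hle : Y * f p ≤ Y * f q + 1 := by
      nlinarith [mul_le_mul_of_nonneg_left h.2 hY.le]
    have hle' : Y * f q ≤ Y * f p + 1 := by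
      nlinarith [mul_le_mul_of_nonneg_left h.1 hY.le]
    have h1 : g p ≤ g q + 1 := by
      have := Int.floor_le_floor hle
      rwa [Int.floor_add_one] at this
    have h2 : g q ≤ g p + 1 := by
      have := Int.floor_le_floor hle'
      rwa [Int.floor_add_one] at this
    omega
  -- self-energy bounds
  have energy_le : ∀ (U N : ℕ), (((((Finset.Ico U (2*U) ×ˢ Finset.Ico N (2*N)) ×ˢ
        (Finset.Ico U (2*U) ×ˢ Finset.Ico N (2*N))).filter
        (fun x : (ℕ×ℕ)×(ℕ×ℕ) => g x.2 = g x.1)).card) ≤ Jk k U N U N Y) := by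
    intro U N
    rw [Jk]
    apply Finset.card_le_card
    intro x hx
    simp only [Finset.mem_filter] at hx ⊢
    exact ⟨hx.1, floor_close x.1 x.2 hx.2.symm⟩
  -- split into three shifts
  have hsplit : (Jk k U₁ N₁ U₂ N₂ Y : ℝ) ≤
      (((R₁ ×ˢ R₂).filter (fun x : (ℕ×ℕ)×(ℕ×ℕ) => g x.2 = g x.1 + (-1))).card : ℝ) +
      (((R₁ ×ˢ R₂).filter (fun x : (ℕ×ℕ)×(ℕ×ℕ) => g x.2 = g x.1 + 0)).card : ℝ) +
      (((R₁ ×ˢ R₂).filter (fun x : (ℕ×ℕ)×(ℕ×ℕ) => g x.2 = g x.1 + 1)).card : ℝ) := by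
    rw [Jk]
    push_cast
    have hsub : ((R₁ ×ˢ R₂).filter
        (fun q : (ℕ × ℕ) × (ℕ × ℕ) =>
          |(q.1.1 : ℝ) / (q.1.2 : ℝ) ^ k - (q.2.1 : ℝ) / (q.2.2 : ℝ) ^ k| ≤ 1 / Y)) ⊆
        ((R₁ ×ˢ R₂).filter (fun x : (ℕ×ℕ)×(ℕ×ℕ) => g x.2 = g x.1 + (-1))) ∪
        ((R₁ ×ˢ R₂).filter (fun x : (ℕ×ℕ)×(ℕ×ℕ) => g x.2 = g x.1 + 0)) ∪
        ((R₁ ×ˢ R₂).filter (fun x : (ℕ×ℕ)×(ℕ×ℕ) => g x.2 = g x.1 + 1)) := by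
      intro x hx
      simp only [Finset.mem_filter, Finset.mem_union] at hx ⊢
      have hc : |f x.1 - f x.2| ≤ 1 / Y := hx.2
      rcases floor_near x.1 x.2 hc with h | h | h
      · exact Or.inl (Or.inl ⟨hx.1, by omega⟩)
      · exact Or.inl (Or.inr ⟨hx.1, by omega⟩)
      · exact Or.inr ⟨hx.1, by omega⟩
    have h1 := Finset.card_le_card hsub
    have h2 := Finset.card_union_le
      (((R₁ ×ˢ R₂).filter (fun x : (ℕ×ℕ)×(ℕ×ℕ) => g x.2 = g x.1 + (-1))) ∪
        ((R₁ ×ˢ R₂).filter (fun x : (ℕ×ℕ)×(ℕ×ℕ) => g x.2 = g x.1 + 0)))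
      ((R₁ ×ˢ R₂).filter (fun x : (ℕ×ℕ)×(ℕ×ℕ) => g x.2 = g x.1 + 1))
    have h3 := Finset.card_union_le
      ((R₁ ×ˢ R₂).filter (fun x : (ℕ×ℕ)×(ℕ×ℕ) => g x.2 = g x.1 + (-1)))
      ((R₁ ×ˢ R₂).filter (fun x : (ℕ×ℕ)×(ℕ×ℕ) => g x.2 = g x.1 + 0))
    have := h1.trans (h2.trans (Nat.add_le_add_right h3 _))
    exact_mod_cast this
  -- bound each shift
  have hbound : ∀ d : ℤ,
      (((R₁ ×ˢ R₂).filter (fun x : (ℕ×ℕ)×(ℕ×ℕ) => g x.2 = g x.1 + d)).card : ℝ) ≤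
        Real.sqrt (Jk k U₁ N₁ U₁ N₁ Y) * Real.sqrt (Jk k U₂ N₂ U₂ N₂ Y) := by
    intro d
    refine (shift_le R₁ R₂ g d).trans ?_
    have b1 := energy_le U₁ N₁
    have b2 := energy_le U₂ N₂
    gcongr <;> exact_mod_cast ‹_›
  refine hsplit.trans ?_
  have b1 := hbound (-1)
  have b2 := hbound 0
  have b3 := hbound 1
  linarith
end

section
/- For every integer k ≥ 1 and every constant c ≥ 1 there exists a constant C = C(k, c) such that the following holds. Let N, M, U, V be positive integers with N ≥ 2, N < M ≤ cN, U < V ≤ cU and U ≤ c N^k, and let Y be a real number with 0 < Y ≤ N^k / 2. Then (1/Y) ∫_{−Y}^{Y} | Σ_{N < n ≤ M} Σ_{U < u ≤ V} e( y u / n^k ) |² dy ≤ C ( N² U² / Y + N^{2k+2} (log N)² / Y ). -/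
open Finset

lemma e_cont (θ : ℝ) : Continuous fun y : ℝ => e (y * θ) := by
  unfold e; fun_prop

lemma abs_e (x : ℝ) : ‖e x‖ = 1 := by
  unfold e
  rw [Complex.norm_exp]
  simp [Complex.mul_re]

lemma e_mul_conj (a b : ℝ) : e a * (starRingEnd ℂ) (e b) = e (a - b) := by
  unfold e
  rw [← Complex.exp_conj, ← Complex.exp_add]
  congr 1
  simp only [map_mul, Complex.conj_I, Complex.conj_ofReal, map_ofNat]
  push_cast; ring

lemma integral_e_le_const {Y : ℝ} (hY : 0 < Y) (θ : ℝ) :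
    ‖∫ y in (-Y)..Y, e (y * θ)‖ ≤ 2 * Y := by
  have := intervalIntegral.norm_integral_le_of_norm_le_const (C := 1)
    (f := fun y : ℝ => e (y * θ)) (a := -Y) (b := Y) (fun x _ => by
      rw [abs_e])
  calc ‖∫ y in (-Y)..Y, e (y * θ)‖ ≤ 1 * |Y - (-Y)| := this
    _ = 2 * Y := by rw [abs_of_pos (by linarith)]; ring

lemma integral_e_le {Y : ℝ} {θ : ℝ} (hθ : θ ≠ 0) :
    ‖∫ y in (-Y)..Y, e (y * θ)‖ ≤ 1 / (2 * |θ|) := by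
  have hc : (2 * Real.pi * Complex.I * θ : ℂ) ≠ 0 := by
    simp [Complex.ext_iff, Real.pi_ne_zero, hθ, Complex.ofReal_ne_zero, Real.pi_pos.ne']
  have h1 : (∫ y in (-Y)..Y, e (y * θ)) =
      (Complex.exp ((2 * Real.pi * Complex.I * θ) * Y)
        - Complex.exp ((2 * Real.pi * Complex.I * θ) * ((-Y : ℝ) : ℂ))) / (2 * Real.pi * Complex.I * θ) := by
    rw [← integral_exp_mul_complex hc]
    apply intervalIntegral.integral_congr
    intro y _
    unfold e
    push_cast
    ring_nf
  rw [h1]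
  have habs : ∀ t : ℝ, ‖Complex.exp ((2 * Real.pi * Complex.I * θ) * t)‖ = 1 := by
    intro t
    rw [Complex.norm_exp]
    simp [Complex.mul_re, Complex.mul_im]
  rw [norm_div]
  have hd : ‖2 * Real.pi * Complex.I * θ‖ = 2 * Real.pi * |θ| := by
    simp [abs_of_pos Real.pi_pos]
  rw [hd]
  have h2 : ‖Complex.exp (2 * Real.pi * Complex.I * θ * Y)
      - Complex.exp (2 * Real.pi * Complex.I * θ * ((-Y : ℝ) : ℂ))‖ ≤ 2 := by
    calc _ ≤ ‖Complex.exp (2 * Real.pi * Complex.I * θ * Y)‖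
        + ‖Complex.exp (2 * Real.pi * Complex.I * θ * ((-Y : ℝ) : ℂ))‖ :=
          norm_sub_le _ _
      _ = 2 := by rw [habs, habs]; norm_num
  have hθ' : 0 < |θ| := abs_pos.mpr hθ
  have hpi : (2:ℝ) ≤ Real.pi := by linarith [Real.pi_gt_three]
  calc _ ≤ 2 / (2 * Real.pi * |θ|) := by
        apply div_le_div_of_nonneg_right h2 (by positivity) |>.trans_eq rfl
    _ ≤ 1 / (2 * |θ|) := by
        rw [div_le_div_iff₀ (by positivity) (by positivity)]
        nlinarith

lemma Tn_bound (n k U V : ℕ) (hn : 1 ≤ n) (hUV : U < V) (Y : ℝ) (hY : 0 < Y) :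
    (∫ y in (-Y)..Y, ‖∑ u ∈ Finset.Ioc U V, e (y * (u : ℝ) / (n : ℝ) ^ k)‖ ^ 2)
      ≤ ((V - U : ℕ) : ℝ) * (4 * Y + (n : ℝ) ^ k * (1 + Real.log ((V - U : ℕ) : ℝ))) := by
  set W : ℕ := V - U with hW
  have hW1 : 1 ≤ W := by omega
  have hnk : (0:ℝ) < (n:ℝ)^k := by positivity
  set s : Finset ℕ := Finset.Ioc U V with hs
  -- the integral I for a frequency θ
  set I : ℝ → ℂ := fun θ => ∫ y in (-Y)..Y, e (y * θ) with hI
  -- step: rewrite the integral as abs of a double sum of I's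
  have key : (∫ y in (-Y)..Y,
        ‖∑ u ∈ s, e (y * (u : ℝ) / (n : ℝ) ^ k)‖ ^ 2)
      = ‖∑ u ∈ s, ∑ v ∈ s, I (((u:ℝ) - (v:ℝ)) / (n:ℝ)^k)‖ := by
    have h1 : ∀ y : ℝ, ((‖∑ u ∈ s, e (y * (u : ℝ) / (n : ℝ) ^ k)‖ ^ 2 : ℝ) : ℂ)
        = ∑ u ∈ s, ∑ v ∈ s, e (y * (((u:ℝ) - (v:ℝ)) / (n:ℝ)^k)) := by
      intro y
      rw [Complex.sq_norm, ← Complex.mul_conj, map_sum, Finset.sum_mul_sum]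
      refine Finset.sum_congr rfl fun u _ => Finset.sum_congr rfl fun v _ => ?_
      rw [e_mul_conj]
      congr 1
      field_simp
    have h2 : (∫ y in (-Y)..Y, ((‖∑ u ∈ s, e (y * (u : ℝ) / (n : ℝ) ^ k)‖ ^ 2 : ℝ) : ℂ))
        = ∑ u ∈ s, ∑ v ∈ s, I (((u:ℝ) - (v:ℝ)) / (n:ℝ)^k) := by
      rw [intervalIntegral.integral_congr (g := fun y => ∑ u ∈ s, ∑ v ∈ s,
          e (y * (((u:ℝ) - (v:ℝ)) / (n:ℝ)^k))) (fun y _ => h1 y)]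
      rw [intervalIntegral.integral_finset_sum (fun u _ =>
        (continuous_finset_sum _ fun v _ => e_cont _).intervalIntegrable _ _)]
      exact Finset.sum_congr rfl fun u _ =>
          intervalIntegral.integral_finset_sum fun v _ => (e_cont _).intervalIntegrable _ _
    have h3 : (0:ℝ) ≤ ∫ y in (-Y)..Y,
        ‖∑ u ∈ s, e (y * (u : ℝ) / (n : ℝ) ^ k)‖ ^ 2 :=
      intervalIntegral.integral_nonneg (by linarith) (fun y _ => by positivity)
    rw [← h2, intervalIntegral.integral_ofReal, Complex.norm_of_nonneg h3]
  rw [key]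
  -- bound function
  set g : ℕ → ℝ := fun m => if m = 0 then 2 * Y else (n:ℝ)^k / (2 * m) with hg
  have hgnonneg : ∀ m, 0 ≤ g m := by
    intro m; rw [hg]; dsimp only
    split
    · linarith
    · positivity
  -- pointwise bound
  have hpt : ∀ u ∈ s, ∀ v ∈ s, ‖I (((u:ℝ) - (v:ℝ)) / (n:ℝ)^k)‖
      ≤ g (((u:ℤ) - (v:ℤ)).natAbs) := by
    intro u _ v _
    rcases eq_or_ne u v with rfl | huv
    · simp only [sub_self, Int.natAbs_zero, hg, if_pos rfl]
      exact integral_e_le_const hY _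
    · have hne : ((u:ℝ) - (v:ℝ)) / (n:ℝ)^k ≠ 0 := by
        have : (u:ℝ) ≠ (v:ℝ) := by exact_mod_cast huv
        intro h
        apply this
        have := div_eq_zero_iff.mp h
        rcases this with h' | h'
        · linarith [sub_eq_zero.mp h']
        · exact absurd h' hnk.ne'
      have hm0 : (((u:ℤ) - (v:ℤ)).natAbs : ℕ) ≠ 0 := by
        simp only [ne_eq, Int.natAbs_eq_zero, sub_eq_zero]
        exact_mod_cast huv
      rw [hg]; dsimp only; rw [if_neg hm0]
      refine (integral_e_le hne).trans_eq ?_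
      rw [abs_div, abs_of_pos hnk]
      have : ((((u:ℤ) - (v:ℤ)).natAbs : ℕ) : ℝ) = |(u:ℝ) - (v:ℝ)| := by
        rw [Nat.cast_natAbs]
        push_cast
        rfl
      rw [← this]
      field_simp
  -- per-u sum bound via fibers
  have hfiber : ∀ u ∈ s, ∑ v ∈ s, g (((u:ℤ) - (v:ℤ)).natAbs)
      ≤ 2 * ∑ m ∈ Finset.range (W + 1), g m := by
    intro u hu
    have hmem : ∀ v ∈ s, (((u:ℤ) - (v:ℤ)).natAbs) ∈ Finset.range (W + 1) := by
      intro v hv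
      simp only [Finset.mem_range]
      simp only [hs, Finset.mem_Ioc] at hu hv
      omega
    have := Finset.sum_fiberwise_eq_sum_filter' s (Finset.range (W+1))
      (fun v : ℕ => ((u:ℤ) - (v:ℤ)).natAbs) g
    rw [Finset.filter_true_of_mem hmem] at this
    rw [← this]
    rw [Finset.mul_sum]
    refine Finset.sum_le_sum fun m _ => ?_
    rw [Finset.sum_const, nsmul_eq_mul]
    have hcard : ((s.filter (fun v : ℕ => ((u:ℤ) - (v:ℤ)).natAbs = m))).card ≤ 2 := by
      have hsub : (s.filter (fun v : ℕ => ((u:ℤ) - (v:ℤ)).natAbs = m)) ⊆ {u + m, u - m} := by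
        intro v hv
        simp only [Finset.mem_filter] at hv
        have := hv.2
        simp only [Finset.mem_insert, Finset.mem_singleton]
        omega
      calc _ ≤ ({u + m, u - m} : Finset ℕ).card := Finset.card_le_card hsub
        _ ≤ 2 := Finset.card_insert_le _ _ |>.trans (by simp)
    calc (((s.filter (fun v : ℕ => ((u:ℤ) - (v:ℤ)).natAbs = m))).card : ℝ) * g m
        ≤ 2 * g m := by
          apply mul_le_mul_of_nonneg_right _ (hgnonneg m)
          exact_mod_cast hcard
      _ = 2 * g m := rfl
  -- sum of g over range
  have hrange : ∑ m ∈ Finset.range (W + 1), g m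
      ≤ 2 * Y + (n:ℝ)^k / 2 * (1 + Real.log W) := by
    rw [Finset.sum_range_succ']
    have h0 : g 0 = 2 * Y := by simp [hg]
    have hsum : ∑ m ∈ Finset.range W, g (m + 1) = (n:ℝ)^k / 2 * (harmonic W : ℝ) := by
      rw [hg]
      simp only [Nat.succ_ne_zero, if_false]
      rw [harmonic]
      push_cast
      rw [Finset.mul_sum]
      refine Finset.sum_congr rfl fun m _ => ?_
      have hm : ((m:ℝ) + 1) ≠ 0 := by positivity
      field_simp
    rw [h0, hsum]
    have := harmonic_le_one_add_log W
    have hh : (0:ℝ) ≤ (n:ℝ)^k / 2 := by positivity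
    nlinarith [harmonic_le_one_add_log W]
  -- combine
  calc ‖∑ u ∈ s, ∑ v ∈ s, I (((u:ℝ) - (v:ℝ)) / (n:ℝ)^k)‖
      ≤ ∑ u ∈ s, ∑ v ∈ s, ‖I (((u:ℝ) - (v:ℝ)) / (n:ℝ)^k)‖ :=
        ((norm_sum_le _ _).trans (Finset.sum_le_sum fun u _ =>
          norm_sum_le _ _))
    _ ≤ ∑ u ∈ s, ∑ v ∈ s, g (((u:ℤ) - (v:ℤ)).natAbs) :=
        Finset.sum_le_sum fun u hu => Finset.sum_le_sum fun v hv => hpt u hu v hv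
    _ ≤ ∑ u ∈ s, 2 * ∑ m ∈ Finset.range (W + 1), g m :=
        Finset.sum_le_sum hfiber
    _ = (s.card : ℝ) * (2 * ∑ m ∈ Finset.range (W + 1), g m) := by
        rw [Finset.sum_const, nsmul_eq_mul]
    _ ≤ (W : ℝ) * (4 * Y + (n:ℝ)^k * (1 + Real.log W)) := by
        have hcard : s.card = W := by rw [hs, Nat.card_Ioc]
        rw [hcard]
        have hlogW : 0 ≤ Real.log W := Real.log_natCast_nonneg W
        have h2 : 2 * ∑ m ∈ Finset.range (W + 1), g m
            ≤ 4 * Y + (n:ℝ)^k * (1 + Real.log W) := by nlinarith [hrange]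
        apply mul_le_mul_of_nonneg_left h2 (by positivity)


set_option maxHeartbeats 1000000 in
lemma arith_main (k : ℕ) (c nn uu P L Y a w lw : ℝ)
    (hc : 1 ≤ c) (hnn : 2 ≤ nn) (huu : 1 ≤ uu) (hPdef : P = nn ^ k)
    (hL : 1/2 ≤ L) (hY : 0 < Y) (hYP : Y ≤ P / 2)
    (ha0 : 0 < a) (hac : a ≤ c * nn) (hw0 : 0 < w) (hwc : w ≤ c * uu)
    (hUc : uu ≤ c * P) (hlw0 : 0 ≤ lw) (hlw : lw ≤ ((k:ℝ) + 2 + 4 * c) * L) :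
    a * (a * (w * (4 * Y + c ^ k * P * lw)))
      ≤ (8 * c ^ 4 + c ^ 3 * c ^ k * ((k : ℝ) + 2 + 4 * c) + 1)
        * (nn ^ 2 * uu ^ 2 + nn ^ (2 * k + 2) * L ^ 2) := by
  have hc0 : (0:ℝ) < c := by linarith
  have hnn0 : (0:ℝ) < nn := by linarith
  have huu0 : (0:ℝ) < uu := by linarith
  have hP0 : (0:ℝ) < P := by rw [hPdef]; positivity
  have hq0 : (0:ℝ) < c ^ k := by positivity
  have hK0 : (0:ℝ) < (k:ℝ) + 2 + 4 * c := by positivity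
  have hL0 : (0:ℝ) < L := by linarith
  have hP2 : nn ^ (2 * k + 2) = nn ^ 2 * P ^ 2 := by
    rw [hPdef, ← pow_mul, ← pow_add]
    congr 1
    ring
  set q : ℝ := c ^ k with hq
  set K : ℝ := (k:ℝ) + 2 + 4 * c with hKdef
  -- a*a*w ≤ c^3 nn^2 uu
  have h1 : a * a ≤ (c * nn) * (c * nn) := mul_le_mul hac hac ha0.le (by positivity)
  have h2 : (a * a) * w ≤ ((c * nn) * (c * nn)) * (c * uu) :=
    mul_le_mul h1 hwc hw0.le (by positivity)
  have h3 : a * a * w ≤ c ^ 3 * nn ^ 2 * uu := by nlinarith [h2]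
  have hbr0 : (0:ℝ) ≤ 4 * Y + q * P * lw := by positivity
  have hmain : a * (a * (w * (4 * Y + q * P * lw)))
      ≤ (c ^ 3 * nn ^ 2 * uu) * (4 * Y + q * P * lw) := by
    have := mul_le_mul_of_nonneg_right h3 hbr0
    nlinarith [this]
  -- term 1
  have hterm1 : (c ^ 3 * nn ^ 2 * uu) * (4 * Y) ≤ 8 * c ^ 4 * (nn ^ 2 * P ^ 2 * L ^ 2) := by
    have huY : uu * Y ≤ (c * P) * (P / 2) := mul_le_mul hUc hYP hY.le (by positivity)
    have hL4 : (1:ℝ) ≤ 4 * L ^ 2 := by nlinarith [sq_nonneg (2 * L - 1)]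
    calc (c ^ 3 * nn ^ 2 * uu) * (4 * Y) = 4 * (c ^ 3 * nn ^ 2) * (uu * Y) := by ring
      _ ≤ 4 * (c ^ 3 * nn ^ 2) * ((c * P) * (P / 2)) := by
          apply mul_le_mul_of_nonneg_left huY (by positivity)
      _ = 2 * c ^ 4 * nn ^ 2 * P ^ 2 * 1 := by ring
      _ ≤ 2 * c ^ 4 * nn ^ 2 * P ^ 2 * (4 * L ^ 2) := by
          apply mul_le_mul_of_nonneg_left hL4 (by positivity)
      _ = 8 * c ^ 4 * (nn ^ 2 * P ^ 2 * L ^ 2) := by ring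
  -- term 2
  have hterm2 : (c ^ 3 * nn ^ 2 * uu) * (q * P * lw)
      ≤ c ^ 3 * q * K * (nn ^ 2 * uu ^ 2 + nn ^ 2 * P ^ 2 * L ^ 2) := by
    have hx : nn ^ 2 * uu * P * L ≤ nn ^ 2 * uu ^ 2 + nn ^ 2 * P ^ 2 * L ^ 2 := by
      nlinarith [sq_nonneg (nn * uu - nn * P * L), mul_pos (mul_pos (mul_pos (mul_pos hnn0 hnn0) huu0) hP0) hL0]
    calc (c ^ 3 * nn ^ 2 * uu) * (q * P * lw)
        = (c ^ 3 * q * (nn ^ 2 * uu * P)) * lw := by ring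
      _ ≤ (c ^ 3 * q * (nn ^ 2 * uu * P)) * (K * L) := by
          apply mul_le_mul_of_nonneg_left hlw (by positivity)
      _ = (c ^ 3 * q * K) * (nn ^ 2 * uu * P * L) := by ring
      _ ≤ (c ^ 3 * q * K) * (nn ^ 2 * uu ^ 2 + nn ^ 2 * P ^ 2 * L ^ 2) := by
          apply mul_le_mul_of_nonneg_left hx (by positivity)
  -- combine
  have hbase1 : (0:ℝ) ≤ nn ^ 2 * uu ^ 2 := by positivity
  have hbase2 : (0:ℝ) ≤ nn ^ 2 * P ^ 2 * L ^ 2 := by positivity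
  rw [hP2]
  have hfin : (c ^ 3 * nn ^ 2 * uu) * (4 * Y + q * P * lw)
      = (c ^ 3 * nn ^ 2 * uu) * (4 * Y) + (c ^ 3 * nn ^ 2 * uu) * (q * P * lw) := by ring
  have hslack : (0:ℝ) ≤ 8 * c ^ 4 * (nn ^ 2 * uu ^ 2)
      + 1 * (nn ^ 2 * uu ^ 2 + nn ^ 2 * P ^ 2 * L ^ 2) := by positivity
  nlinarith [hmain, hterm1, hterm2, hbase1, hbase2, hslack]


set_option maxHeartbeats 1000000 in
theorem small_Y_mean_value_bound (k : ℕ) (hk : 1 ≤ k) (c : ℝ) (hc : 1 ≤ c) :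
    ∃ C : ℝ, 0 < C ∧
      ∀ N M U V : ℕ, 2 ≤ N → 0 < U → N < M → (M : ℝ) ≤ c * N → U < V → (V : ℝ) ≤ c * U →
        (U : ℝ) ≤ c * (N : ℝ) ^ k →
        ∀ Y : ℝ, 0 < Y → Y ≤ (N : ℝ) ^ k / 2 →
          (1 / Y) * (∫ y in (-Y)..Y,
              ‖∑ n ∈ Finset.Ioc N M, ∑ u ∈ Finset.Ioc U V,
                e (y * (u : ℝ) / (n : ℝ) ^ k)‖ ^ 2)
          ≤ C * ((N : ℝ) ^ 2 * (U : ℝ) ^ 2 / Y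
              + (N : ℝ) ^ (2 * k + 2) * (Real.log N) ^ 2 / Y) := by
  have hc0 : 0 < c := by linarith
  refine ⟨8 * c ^ 4 + c ^ 3 * c ^ k * ((k : ℝ) + 2 + 4 * c) + 1, by positivity, ?_⟩
  intro N M U V hN hU hNM hMc hUV hVc hUc Y hY hYN
  set nn : ℝ := (N : ℝ) with hnn
  set uu : ℝ := (U : ℝ) with huu
  set P : ℝ := nn ^ k with hP
  set L : ℝ := Real.log nn with hL
  have hnn2 : (2:ℝ) ≤ nn := by rw [hnn]; exact_mod_cast hN
  have hnn0 : 0 < nn := by linarith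
  have huu1 : (1:ℝ) ≤ uu := by rw [huu]; exact_mod_cast hU
  have hP0 : 0 < P := by rw [hP]; positivity
  have hL2 : (1:ℝ)/2 ≤ L := by
    have h1 : Real.log 2 ≤ L := Real.log_le_log (by norm_num) hnn2
    have h2 := Real.log_two_gt_d9
    linarith
  set A : ℕ := M - N with hA
  set W : ℕ := V - U with hW
  have hA1 : 1 ≤ A := by omega
  have hW1 : 1 ≤ W := by omega
  set a : ℝ := (A : ℝ) with ha
  set w : ℝ := (W : ℝ) with hw
  have ha0 : 0 < a := by rw [ha]; exact_mod_cast hA1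
  have hw0 : 0 < w := by rw [hw]; exact_mod_cast hW1
  have hac : a ≤ c * nn := by
    have h : a = (M:ℝ) - nn := by rw [ha, hA]; push_cast [Nat.cast_sub hNM.le]; ring
    rw [h]; linarith
  have hwc : w ≤ c * uu := by
    have h : w = (V:ℝ) - uu := by rw [hw, hW]; push_cast [Nat.cast_sub hUV.le]; ring
    rw [h]; linarith
  have hcontU : ∀ n : ℕ, Continuous fun y : ℝ =>
      ‖∑ u ∈ Finset.Ioc U V, e (y * (u : ℝ) / (n : ℝ) ^ k)‖ ^ 2 := by
    intro n
    apply Continuous.pow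
    apply continuous_norm.comp
    apply continuous_finset_sum
    intro u _
    unfold e
    fun_prop
  have hcontS : Continuous fun y : ℝ =>
      ‖∑ n ∈ Finset.Ioc N M, ∑ u ∈ Finset.Ioc U V,
        e (y * (u : ℝ) / (n : ℝ) ^ k)‖ ^ 2 := by
    apply Continuous.pow
    apply continuous_norm.comp
    apply continuous_finset_sum
    intro n _
    apply continuous_finset_sum
    intro u _
    unfold e
    fun_prop
  have step1 : ∀ y : ℝ,
      ‖∑ n ∈ Finset.Ioc N M, ∑ u ∈ Finset.Ioc U V,
        e (y * (u : ℝ) / (n : ℝ) ^ k)‖ ^ 2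
      ≤ a * ∑ n ∈ Finset.Ioc N M,
          ‖∑ u ∈ Finset.Ioc U V, e (y * (u : ℝ) / (n : ℝ) ^ k)‖ ^ 2 := by
    intro y
    have h1 : ‖∑ n ∈ Finset.Ioc N M, ∑ u ∈ Finset.Ioc U V,
        e (y * (u : ℝ) / (n : ℝ) ^ k)‖
        ≤ ∑ n ∈ Finset.Ioc N M,
          ‖∑ u ∈ Finset.Ioc U V, e (y * (u : ℝ) / (n : ℝ) ^ k)‖ :=
      norm_sum_le _ _
    have h2 : (∑ n ∈ Finset.Ioc N M,
        ‖∑ u ∈ Finset.Ioc U V, e (y * (u : ℝ) / (n : ℝ) ^ k)‖) ^ 2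
        ≤ ((Finset.Ioc N M).card : ℝ) * ∑ n ∈ Finset.Ioc N M,
          ‖∑ u ∈ Finset.Ioc U V, e (y * (u : ℝ) / (n : ℝ) ^ k)‖ ^ 2 :=
      sq_sum_le_card_mul_sum_sq
    have hcard : ((Finset.Ioc N M).card : ℝ) = a := by rw [Nat.card_Ioc]
    calc ‖∑ n ∈ Finset.Ioc N M, ∑ u ∈ Finset.Ioc U V,
        e (y * (u : ℝ) / (n : ℝ) ^ k)‖ ^ 2
        ≤ (∑ n ∈ Finset.Ioc N M,
          ‖∑ u ∈ Finset.Ioc U V, e (y * (u : ℝ) / (n : ℝ) ^ k)‖) ^ 2 := by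
          apply pow_le_pow_left₀ (norm_nonneg _) h1
      _ ≤ _ := by rw [← hcard]; exact h2
  have step2 : (∫ y in (-Y)..Y,
      ‖∑ n ∈ Finset.Ioc N M, ∑ u ∈ Finset.Ioc U V,
        e (y * (u : ℝ) / (n : ℝ) ^ k)‖ ^ 2)
      ≤ a * ∑ n ∈ Finset.Ioc N M, (∫ y in (-Y)..Y,
          ‖∑ u ∈ Finset.Ioc U V, e (y * (u : ℝ) / (n : ℝ) ^ k)‖ ^ 2) := by
    have hInt1 : IntervalIntegrable (fun y : ℝ =>
        ‖∑ n ∈ Finset.Ioc N M, ∑ u ∈ Finset.Ioc U V,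
          e (y * (u : ℝ) / (n : ℝ) ^ k)‖ ^ 2) MeasureTheory.volume (-Y) Y :=
      hcontS.intervalIntegrable _ _
    have hInt2 : IntervalIntegrable (fun y : ℝ => a * ∑ n ∈ Finset.Ioc N M,
        ‖∑ u ∈ Finset.Ioc U V, e (y * (u : ℝ) / (n : ℝ) ^ k)‖ ^ 2)
        MeasureTheory.volume (-Y) Y := by
      apply Continuous.intervalIntegrable
      exact continuous_const.mul (continuous_finset_sum _ fun n _ => hcontU n)
    calc (∫ y in (-Y)..Y,
        ‖∑ n ∈ Finset.Ioc N M, ∑ u ∈ Finset.Ioc U V,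
          e (y * (u : ℝ) / (n : ℝ) ^ k)‖ ^ 2)
        ≤ (∫ y in (-Y)..Y, a * ∑ n ∈ Finset.Ioc N M,
          ‖∑ u ∈ Finset.Ioc U V, e (y * (u : ℝ) / (n : ℝ) ^ k)‖ ^ 2) := by
          apply intervalIntegral.integral_mono_on (by linarith) hInt1 hInt2
          intro y _
          exact step1 y
      _ = a * ∑ n ∈ Finset.Ioc N M, (∫ y in (-Y)..Y,
          ‖∑ u ∈ Finset.Ioc U V, e (y * (u : ℝ) / (n : ℝ) ^ k)‖ ^ 2) := by
          rw [intervalIntegral.integral_const_mul,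
            intervalIntegral.integral_finset_sum (fun n _ => (hcontU n).intervalIntegrable _ _)]
  have step3 : ∑ n ∈ Finset.Ioc N M, (∫ y in (-Y)..Y,
      ‖∑ u ∈ Finset.Ioc U V, e (y * (u : ℝ) / (n : ℝ) ^ k)‖ ^ 2)
      ≤ a * (w * (4 * Y + c ^ k * P * (1 + Real.log w))) := by
    have hterm : ∀ n ∈ Finset.Ioc N M, (∫ y in (-Y)..Y,
        ‖∑ u ∈ Finset.Ioc U V, e (y * (u : ℝ) / (n : ℝ) ^ k)‖ ^ 2)
        ≤ w * (4 * Y + c ^ k * P * (1 + Real.log w)) := by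
      intro n hn
      simp only [Finset.mem_Ioc] at hn
      have hn1 : 1 ≤ n := by omega
      refine (Tn_bound n k U V hn1 hUV Y hY).trans ?_
      have hnk : (n:ℝ) ^ k ≤ c ^ k * P := by
        rw [hP, ← mul_pow]
        apply pow_le_pow_left₀ (by positivity)
        have h1 : (n:ℝ) ≤ (M:ℝ) := by exact_mod_cast hn.2
        linarith
      have hlogw : 0 ≤ 1 + Real.log w := by
        have h : 0 ≤ Real.log w := by rw [hw]; exact Real.log_natCast_nonneg W
        linarith
      have hbr : (4 : ℝ) * Y + (n:ℝ)^k * (1 + Real.log w)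
          ≤ 4 * Y + c ^ k * P * (1 + Real.log w) := by
        nlinarith [hnk, hlogw]
      calc ((W:ℕ):ℝ) * (4 * Y + (n : ℝ) ^ k * (1 + Real.log ((W:ℕ):ℝ)))
          = w * (4 * Y + (n : ℝ) ^ k * (1 + Real.log w)) := by rw [← hw]
        _ ≤ w * (4 * Y + c ^ k * P * (1 + Real.log w)) := by
            apply mul_le_mul_of_nonneg_left hbr hw0.le
    calc ∑ n ∈ Finset.Ioc N M, (∫ y in (-Y)..Y,
        ‖∑ u ∈ Finset.Ioc U V, e (y * (u : ℝ) / (n : ℝ) ^ k)‖ ^ 2)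
        ≤ ∑ _n ∈ Finset.Ioc N M, w * (4 * Y + c ^ k * P * (1 + Real.log w)) :=
          Finset.sum_le_sum hterm
      _ = a * (w * (4 * Y + c ^ k * P * (1 + Real.log w))) := by
          rw [Finset.sum_const, nsmul_eq_mul, Nat.card_Ioc]
  have hlogw2 : 1 + Real.log w ≤ ((k:ℝ) + 2 + 4 * c) * L := by
    have hwle : w ≤ c ^ 2 * P := by
      have h6 : c * uu ≤ c * (c * P) := mul_le_mul_of_nonneg_left hUc hc0.le
      calc w ≤ c * uu := hwc
        _ ≤ c * (c * P) := h6
        _ = c ^ 2 * P := by ring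
    have h1 : Real.log w ≤ Real.log (c ^ 2 * P) := Real.log_le_log hw0 hwle
    have h2 : Real.log (c ^ 2 * P) = 2 * Real.log c + (k:ℝ) * L := by
      rw [Real.log_mul (by positivity) (by positivity), Real.log_pow, hP, Real.log_pow, hL]
      push_cast; ring
    have h3 : Real.log c ≤ c - 1 := Real.log_le_sub_one_of_pos hc0
    have h4 : 2 * c ≤ 4 * c * L := by nlinarith [hL2, hc0]
    linarith [h1, h2.le, h3, h4, hL2]
  have hlogw0 : 0 ≤ 1 + Real.log w := by
    have h : 0 ≤ Real.log w := by rw [hw]; exact Real.log_natCast_nonneg W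
    linarith
  have hEbound := arith_main k c nn uu P L Y a w (1 + Real.log w) hc hnn2 huu1 hP
    hL2 hY (by rw [hP]; exact hYN) ha0 hac hw0 hwc hUc hlogw0 hlogw2
  have hchain : (∫ y in (-Y)..Y,
      ‖∑ n ∈ Finset.Ioc N M, ∑ u ∈ Finset.Ioc U V,
        e (y * (u : ℝ) / (n : ℝ) ^ k)‖ ^ 2)
      ≤ (8 * c ^ 4 + c ^ 3 * c ^ k * ((k : ℝ) + 2 + 4 * c) + 1)
        * (nn ^ 2 * uu ^ 2 + nn ^ (2 * k + 2) * L ^ 2) := by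
    refine step2.trans ?_
    refine (mul_le_mul_of_nonneg_left step3 ha0.le).trans hEbound
  have hYinv : (0:ℝ) ≤ 1 / Y := by positivity
  calc (1 / Y) * (∫ y in (-Y)..Y,
      ‖∑ n ∈ Finset.Ioc N M, ∑ u ∈ Finset.Ioc U V,
        e (y * (u : ℝ) / (n : ℝ) ^ k)‖ ^ 2)
      ≤ (1 / Y) * ((8 * c ^ 4 + c ^ 3 * c ^ k * ((k : ℝ) + 2 + 4 * c) + 1)
        * (nn ^ 2 * uu ^ 2 + nn ^ (2 * k + 2) * L ^ 2)) :=
        mul_le_mul_of_nonneg_left hchain hYinv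
    _ = (8 * c ^ 4 + c ^ 3 * c ^ k * ((k : ℝ) + 2 + 4 * c) + 1)
        * (nn ^ 2 * uu ^ 2 / Y + nn ^ (2 * k + 2) * L ^ 2 / Y) := by ring
end

section
/- For every integer k ≥ 1 and every ε > 0 there exists a constant C = C(k, ε) such that for all integers N ≥ 2 and all real numbers Y with 0 < Y ≤ N^{k+ε}, one has I_k(N, Y) ≤ C · N^{2k+2+2ε} / Y. -/
open Finset

theorem Ik_small_Y_bound (k : ℕ) (hk : 1 ≤ k) (ε : ℝ) (hε : 0 < ε) :
    ∃ C : ℝ, 0 < C ∧ ∀ N : ℕ, 2 ≤ N → ∀ Y : ℝ, 0 < Y → Y ≤ (N : ℝ) ^ ((k : ℝ) + ε) →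
      ((((Finset.Icc 1 N ×ˢ Finset.Icc 1 N) ×ˢ
          (Finset.Icc 1 (N ^ k) ×ˢ Finset.Icc 1 (N ^ k))).filter
        (fun q : (ℕ × ℕ) × (ℕ × ℕ) =>
          q.2.1 ≤ q.1.1 ^ k ∧ q.2.2 ≤ q.1.2 ^ k ∧
          |(q.2.1 : ℝ) / (q.1.1 : ℝ) ^ k - (q.2.2 : ℝ) / (q.1.2 : ℝ) ^ k| ≤ 1 / Y)).card : ℝ)
      ≤ C * (N : ℝ) ^ (2 * (k : ℝ) + 2 + 2 * ε) / Y := by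
  refine ⟨3, by norm_num, ?_⟩
  intro N hN Y hY hYle
  have hN1 : (1:ℝ) ≤ (N:ℝ) := by
    have : (1:ℕ) ≤ N := le_trans one_le_two hN
    exact_mod_cast this
  have hNk : (0:ℝ) < (N:ℝ)^k := by positivity
  set S := (((Finset.Icc 1 N ×ˢ Finset.Icc 1 N) ×ˢ
          (Finset.Icc 1 (N ^ k) ×ˢ Finset.Icc 1 (N ^ k))).filter
        (fun q : (ℕ × ℕ) × (ℕ × ℕ) =>
          q.2.1 ≤ q.1.1 ^ k ∧ q.2.2 ≤ q.1.2 ^ k ∧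
          |(q.2.1 : ℝ) / (q.1.1 : ℝ) ^ k - (q.2.2 : ℝ) / (q.1.2 : ℝ) ^ k| ≤ 1 / Y)) with hSdef
  set T := (Finset.Icc 1 N ×ˢ Finset.Icc 1 N) ×ˢ Finset.Icc 1 (N ^ k) with hTdef
  have hmap : ∀ q ∈ S, (q.1, q.2.1) ∈ T := by
    intro q hq
    simp only [hSdef, Finset.mem_filter, Finset.mem_product] at hq
    simp only [hTdef, Finset.mem_product]
    exact ⟨⟨hq.1.1.1, hq.1.1.2⟩, hq.1.2.1⟩
  have hcard := Finset.card_eq_sum_card_fiberwise hmap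
  set D := ⌊2 * (N:ℝ)^k / Y⌋₊ with hDdef
  have hD : (D:ℝ) ≤ 2*(N:ℝ)^k/Y := Nat.floor_le (by positivity)
  -- fiber bound
  have hfiber : ∀ b ∈ T,
      ((S.filter (fun q => (q.1, q.2.1) = b)).card : ℝ) ≤ 2*(N:ℝ)^k/Y + 1 := by
    intro b hb
    obtain ⟨⟨n₁, n₂⟩, u₁⟩ := b
    simp only [hTdef, Finset.mem_product, Finset.mem_Icc] at hb
    set F := S.filter (fun q => (q.1, q.2.1) = ((n₁, n₂), u₁)) with hFdef
    set F' := F.image (fun q : (ℕ × ℕ) × (ℕ × ℕ) => q.2.2) with hF'def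
    have hinj : Set.InjOn (fun q : (ℕ × ℕ) × (ℕ × ℕ) => q.2.2) F := by
      intro x hx y hy hxy
      simp only [hFdef, Finset.coe_filter, Set.mem_setOf_eq] at hx hy
      have hx2 := hx.2
      have hy2 := hy.2
      have : x.1 = (n₁, n₂) ∧ x.2.1 = u₁ := Prod.mk.injEq _ _ _ _ ▸ Prod.mk.inj hx2
      have h2 : y.1 = (n₁, n₂) ∧ y.2.1 = u₁ := Prod.mk.injEq _ _ _ _ ▸ Prod.mk.inj hy2
      ext
      · rw [this.1, h2.1]
      · rw [this.1, h2.1]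
      · rw [this.2, h2.2]
      · exact hxy
    have hcardF : F.card = F'.card := (Finset.card_image_of_injOn hinj).symm
    -- key: any element u of F' satisfies the distance inequality
    have hmem : ∀ u ∈ F', 1 ≤ u ∧
        |(u₁ : ℝ) / (n₁ : ℝ) ^ k - (u : ℝ) / (n₂ : ℝ) ^ k| ≤ 1 / Y := by
      intro u hu
      simp only [hF'def, Finset.mem_image] at hu
      obtain ⟨q, hq, hq2⟩ := hu
      simp only [hFdef, Finset.mem_filter] at hq
      have hqb := hq.2
      have hq1 : q.1 = (n₁, n₂) ∧ q.2.1 = u₁ := Prod.mk.inj hqb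
      have hqS := hq.1
      simp only [hSdef, Finset.mem_filter, Finset.mem_product, Finset.mem_Icc] at hqS
      constructor
      · rw [← hq2]; exact hqS.1.2.2.1
      · have := hqS.2.2.2
        rw [hq1.2, hq2] at this
        rw [hq1.1] at this
        exact this
    have hdiff : ∀ u ∈ F', ∀ v ∈ F', (u:ℝ) - (v:ℝ) ≤ 2*(N:ℝ)^k/Y := by
      intro u hu v hv
      have h1 := (hmem u hu).2
      have h2 := (hmem v hv).2
      have hn₂ : (0:ℝ) < (n₂:ℝ)^k := by
        have : (1:ℕ) ≤ n₂ := hb.1.2.1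
        have : (1:ℝ) ≤ (n₂:ℝ) := by exact_mod_cast this
        positivity
      have habs : |(u:ℝ)/(n₂:ℝ)^k - (v:ℝ)/(n₂:ℝ)^k| ≤ 2/Y := by
        calc |(u:ℝ)/(n₂:ℝ)^k - (v:ℝ)/(n₂:ℝ)^k|
            = |((u:ℝ)/(n₂:ℝ)^k - (u₁:ℝ)/(n₁:ℝ)^k) + ((u₁:ℝ)/(n₁:ℝ)^k - (v:ℝ)/(n₂:ℝ)^k)| := by
              ring_nf
          _ ≤ |(u:ℝ)/(n₂:ℝ)^k - (u₁:ℝ)/(n₁:ℝ)^k| + |(u₁:ℝ)/(n₁:ℝ)^k - (v:ℝ)/(n₂:ℝ)^k| :=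
              abs_add_le _ _
          _ ≤ 1/Y + 1/Y := by
              rw [abs_sub_comm]
              exact add_le_add h1 h2
          _ = 2/Y := by ring
      have hdiv : |(u:ℝ) - (v:ℝ)| / (n₂:ℝ)^k ≤ 2/Y := by
        rwa [div_sub_div_same, abs_div, abs_of_pos hn₂] at habs
      have h3 : |(u:ℝ) - (v:ℝ)| ≤ 2/Y * (n₂:ℝ)^k := by
        rw [div_le_iff₀ hn₂] at hdiv; exact hdiv
      have hn₂N : (n₂:ℝ)^k ≤ (N:ℝ)^k := by
        have : (n₂:ℝ) ≤ (N:ℝ) := by exact_mod_cast hb.1.2.2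
        exact pow_le_pow_left₀ (by positivity) this k
      calc (u:ℝ) - (v:ℝ) ≤ |(u:ℝ) - (v:ℝ)| := le_abs_self _
        _ ≤ 2/Y * (n₂:ℝ)^k := h3
        _ ≤ 2/Y * (N:ℝ)^k := by
            apply mul_le_mul_of_nonneg_left hn₂N (by positivity)
        _ = 2*(N:ℝ)^k/Y := by ring
    -- now bound card F'
    have hcardF' : (F'.card : ℝ) ≤ 2*(N:ℝ)^k/Y + 1 := by
      rcases F'.eq_empty_or_nonempty with he | hne
      · simp [he]; positivity
      · set m := F'.min' hne with hmdef
        have hsub : F' ⊆ Finset.Icc m (m + D) := by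
          intro u hu
          rw [Finset.mem_Icc]
          refine ⟨F'.min'_le u hu, ?_⟩
          have hm : m ∈ F' := F'.min'_mem hne
          have hle : m ≤ u := F'.min'_le u hu
          have hreal : ((u - m : ℕ) : ℝ) ≤ 2*(N:ℝ)^k/Y := by
            rw [Nat.cast_sub hle]
            exact hdiff u hu m hm
          have : u - m ≤ D := Nat.le_floor hreal
          omega
        calc (F'.card : ℝ) ≤ ((Finset.Icc m (m + D)).card : ℝ) := by
              exact_mod_cast Finset.card_le_card hsub
          _ = (D : ℝ) + 1 := by
              rw [Nat.card_Icc, show m + D + 1 - m = D + 1 by omega]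
              push_cast; ring
          _ ≤ 2*(N:ℝ)^k/Y + 1 := by linarith
    calc ((S.filter (fun q => (q.1, q.2.1) = ((n₁, n₂), u₁))).card : ℝ)
        = (F'.card : ℝ) := by rw [← hFdef, hcardF]
      _ ≤ 2*(N:ℝ)^k/Y + 1 := hcardF'
  -- sum over T
  have hTcard : (T.card : ℝ) = (N:ℝ) * (N:ℝ) * (N:ℝ)^k := by
    rw [hTdef, Finset.card_product, Finset.card_product, Nat.card_Icc]
    simp [Nat.add_sub_cancel]
  have hsum : (S.card : ℝ) ≤ (N:ℝ) * (N:ℝ) * (N:ℝ)^k * (2*(N:ℝ)^k/Y + 1) := by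
    rw [hcard]
    push_cast
    calc (∑ b ∈ T, ((S.filter (fun q => (q.1, q.2.1) = b)).card : ℝ))
        ≤ ∑ _b ∈ T, (2*(N:ℝ)^k/Y + 1) := Finset.sum_le_sum hfiber
      _ = (T.card : ℝ) * (2*(N:ℝ)^k/Y + 1) := by rw [Finset.sum_const, nsmul_eq_mul]
      _ = (N:ℝ) * (N:ℝ) * (N:ℝ)^k * (2*(N:ℝ)^k/Y + 1) := by rw [hTcard]
  -- final real estimate
  have hrw : ∀ r : ℝ, (N:ℝ) ^ r = Real.rpow (N:ℝ) r := fun r => rfl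
  have hmono : ∀ a b : ℝ, a ≤ b → (N:ℝ) ^ a ≤ (N:ℝ) ^ b := fun a b h =>
    Real.rpow_le_rpow_of_exponent_le hN1 h
  have hpow1 : (N:ℝ) * (N:ℝ) * (N:ℝ)^k * ((N:ℝ)^k) = (N:ℝ) ^ (2*(k:ℝ) + 2) := by
    rw [show (2*(k:ℝ) + 2) = ((2*k + 2 : ℕ) : ℝ) by push_cast; ring,
      Real.rpow_natCast]
    ring
  have hpow2 : (N:ℝ) * (N:ℝ) * (N:ℝ)^k = (N:ℝ) ^ ((k:ℝ) + 2) := by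
    rw [show ((k:ℝ) + 2) = ((k + 2 : ℕ) : ℝ) by push_cast; ring, Real.rpow_natCast]
    ring
  have key1 : (N:ℝ) ^ (2*(k:ℝ) + 2) ≤ (N:ℝ) ^ (2*(k:ℝ) + 2 + 2*ε) :=
    hmono _ _ (by linarith)
  have key2 : (N:ℝ) ^ ((k:ℝ) + 2) ≤ (N:ℝ) ^ (2*(k:ℝ) + 2 + 2*ε) / Y := by
    rw [le_div_iff₀ hY]
    calc (N:ℝ) ^ ((k:ℝ) + 2) * Y ≤ (N:ℝ) ^ ((k:ℝ) + 2) * (N:ℝ) ^ ((k:ℝ) + ε) := by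
          apply mul_le_mul_of_nonneg_left hYle
          positivity
      _ = (N:ℝ) ^ (2*(k:ℝ) + 2 + ε) := by
          rw [← Real.rpow_add (by linarith : (0:ℝ) < (N:ℝ))]
          ring_nf
      _ ≤ (N:ℝ) ^ (2*(k:ℝ) + 2 + 2*ε) := hmono _ _ (by linarith)
  calc (S.card : ℝ) ≤ (N:ℝ) * (N:ℝ) * (N:ℝ)^k * (2*(N:ℝ)^k/Y + 1) := hsum
    _ = 2 * ((N:ℝ) ^ (2*(k:ℝ) + 2)) / Y + (N:ℝ) ^ ((k:ℝ) + 2) := by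
        rw [← hpow1, ← hpow2]; field_simp
    _ ≤ 2 * ((N:ℝ) ^ (2*(k:ℝ) + 2 + 2*ε)) / Y + (N:ℝ) ^ (2*(k:ℝ) + 2 + 2*ε) / Y := by
        apply add_le_add _ key2
        gcongr
    _ = 3 * (N:ℝ) ^ (2*(k:ℝ) + 2 + 2*ε) / Y := by ring
end
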